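/- arXiv:1504.01431 — 3 statements merged into one kernel-verified Lean document; each statement's English description precedes it below -/
import Mathlib

section
/- There is an integer E₁ depending only on n (the paper computes E₁ = (10n+1)·log n) such that for every xy ∈ {αβ, αγ, βγ} and every pair of nodes u, v of G: the weighted RNA folding score WRNA([NG(u) ∘ p(LG(v))^R]_{xy}) equals E₁ if u ∈ N(v), and is at most E₁ − 1 otherwise. -/
/-!
Formalization of (weighted) RNA folding from
"If the Current Clique Algorithms are Optimal, so is Valiant's Parser"
(Abboud, Backurs, Vassilevska Williams), Section 3.

Letters come from `Σ ∪ Σ'`, modelled as `σ ⊕ σ`: `Sum.inl a` is the letter `a ∈ Σ` and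
`Sum.inr a` is its matching letter `a' ∈ Σ'`.
-/

namespace RNAFolding

/-- Letters `x` and `y` match iff `y = x'` or `x = y'`. -/
def LMatches {σ : Type*} : σ ⊕ σ → σ ⊕ σ → Prop
  | .inl a, .inr b => a = b
  | .inr a, .inl b => a = b
  | _, _ => False

/-- Two pairs of indices `(i₁,j₁)`, `(i₂,j₂)` with `i₁<j₁` and `i₂<j₂` "cross" iff they share an
index, or `i₁<i₂<j₁<j₂`, or `i₂<i₁<j₂<j₁`. -/
def Crosses (p q : ℕ × ℕ) : Prop :=
  p.1 = q.1 ∨ p.1 = q.2 ∨ p.2 = q.1 ∨ p.2 = q.2 ∨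
    (p.1 < q.1 ∧ q.1 < p.2 ∧ p.2 < q.2) ∨ (q.1 < p.1 ∧ p.1 < q.2 ∧ q.2 < p.2)

/-- `A` is a valid folding of `S`: every pair `(i,j) ∈ A` satisfies `i < j < |S|` and the letters
`S[i]`, `S[j]` match, and no two pairs of `A` cross. -/
def IsFolding {σ : Type*} (S : List (σ ⊕ σ)) (A : Finset (ℕ × ℕ)) : Prop :=
  (∀ p ∈ A, p.1 < p.2 ∧ p.2 < S.length ∧ ∃ x ∈ S[p.1]?, ∃ y ∈ S[p.2]?, LMatches x y) ∧
    ∀ p ∈ A, ∀ q ∈ A, p ≠ q → ¬ Crosses p q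

/-- The weighted RNA folding score `WRNA(S)`: the maximum of `∑_{(i,j) ∈ A} w(S[i])` over all
valid foldings `A` of `S` (with the weight function extended to `Σ'` by `w(σ') = w(σ)`). -/
noncomputable def WRNA {σ : Type*} (w : σ → ℕ) (S : List (σ ⊕ σ)) : ℕ :=
  sSup {m | ∃ A : Finset (ℕ × ℕ),
    IsFolding S A ∧ ∑ p ∈ A, (S.map (Sum.elim w w)).getD p.1 0 = m}

/-- The (unweighted) RNA folding score `RNA(S)`: the maximum number of non-crossing matching
pairs, i.e. the weighted score with all weights equal to `1`. -/
noncomputable def RNA {σ : Type*} (S : List (σ ⊕ σ)) : ℕ := WRNA (fun _ => 1) S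

/-! ### The clique-detecting RNA sequence -/

/-- The three pairs of types `αβ`, `αγ`, `βγ`. -/
inductive PT
  | ab | ag | bg
  deriving DecidableEq

/-- The base symbols `0, 1, $, #, g` that get marked with a pair of types. -/
inductive RBase
  | b0 | b1 | dollar | hash | g
  deriving DecidableEq

/-- The 18 plain letters: `Σ = {α, β, γ} ∪ ⋃_{xy ∈ {αβ,αγ,βγ}} {0, 1, $, #, g}_xy`
(together with the matching copies `Σ'` this makes 36 letters). -/
inductive RSig
  | alpha | beta | gamma
  | mk (b : RBase) (p : PT)
  deriving DecidableEq

/-- Letters: a plain (`Sum.inl`) or primed (`Sum.inr`) copy of each symbol of `Σ`. -/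
abbrev RL := RSig ⊕ RSig

/-- A "core" symbol: a base symbol with a primed-ness flag, before marking by a pair of types. -/
abbrev RCore := Bool × RBase

/-- Marking a core symbol with the pair of types `xy`. -/
def mark (p : PT) : RCore → RL
  | (false, b) => .inl (.mk b p)
  | (true, b) => .inr (.mk b p)

/-- `[s]_xy`: marking every letter of a core string with the pair of types `xy`. -/
def markStr (p : PT) (s : List RCore) : List RL := s.map (mark p)

/-- `p(s)`: replacing every letter `σ` by its matching letter `σ'` (and conversely). -/
def primeStr (s : List RCore) : List RCore := s.map (fun x => (!x.1, x.2))

/-- `m`-fold repetition `l^m` of a list. -/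
def rep {α : Type*} (l : List α) (m : ℕ) : List α := (List.replicate m l).flatten

/-- The binary encoding `v̄` of a node `v`, of length exactly `2⌈log n⌉`, as a core string. -/
def bin (n : ℕ) (v : Fin n) : List RCore :=
  (List.range (2 * Nat.clog 2 n)).map
    (fun i => (false, if v.val.testBit i then RBase.b1 else RBase.b0))

/-- The (unprimed) letter `$`. -/
def dol : RCore := (false, .dollar)

/-- The (unprimed) letter `#`. -/
def hsh : RCore := (false, .hash)

open Classical in
/-- The neighbors of `v`, in some fixed order. -/
noncomputable def nbrs (n : ℕ) (G : SimpleGraph (Fin n)) (v : Fin n) : List (Fin n) :=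
  (Finset.univ.filter (fun u => G.Adj v u)).toList

open Classical in
/-- The non-neighbors of `v`, in some fixed order. -/
noncomputable def nonNbrs (n : ℕ) (G : SimpleGraph (Fin n)) (v : Fin n) : List (Fin n) :=
  (Finset.univ.filter (fun u => ¬ G.Adj v u)).toList

/-- The node gadget `NG(v) = $^{2n} v̄ $^{2n}`. -/
def NGr (n : ℕ) (v : Fin n) : List RCore :=
  List.replicate (2 * n) dol ++ bin n v ++ List.replicate (2 * n) dol

/-- The list gadget `LG(v) = (∘_{u ∈ N(v)} ($ ū $)) ∘ (∘_{u ∉ N(v)} ($ $))`. -/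
noncomputable def LGr (n : ℕ) (G : SimpleGraph (Fin n)) (v : Fin n) : List RCore :=
  (nbrs n G v).flatMap (fun u => [dol] ++ bin n u ++ [dol]) ++
    (nonNbrs n G v).flatMap (fun _ => [dol, dol])

/-- The clique node gadget `CNG(t) = ∘_{v ∈ t} (# NG(v) #)^k`. -/
noncomputable def CNGr (n k : ℕ) (t : Finset (Fin n)) : List RCore :=
  t.toList.flatMap (fun v => rep ([hsh] ++ NGr n v ++ [hsh]) k)

/-- The clique list gadget `CLG(t) = (∘_{v ∈ t} (# LG(v) #))^k`. -/
noncomputable def CLGr (n k : ℕ) (G : SimpleGraph (Fin n)) (t : Finset (Fin n)) : List RCore :=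
  rep (t.toList.flatMap (fun v => [hsh] ++ LGr n G v ++ [hsh])) k

/-- `CG_α(t) = [g CNG(t) g]_{αγ} ∘ [g' p(CLG(t))^R g']_{αβ}`. -/
noncomputable def CGa (n k : ℕ) (G : SimpleGraph (Fin n)) (t : Finset (Fin n)) : List RL :=
  markStr .ag ([(false, .g)] ++ CNGr n k t ++ [(false, .g)]) ++
    markStr .ab ([(true, .g)] ++ (primeStr (CLGr n k G t)).reverse ++ [(true, .g)])

/-- `CG_β(t) = [g CNG(t) g]_{αβ} ∘ [g' p(CLG(t))^R g']_{βγ}`. -/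
noncomputable def CGb (n k : ℕ) (G : SimpleGraph (Fin n)) (t : Finset (Fin n)) : List RL :=
  markStr .ab ([(false, .g)] ++ CNGr n k t ++ [(false, .g)]) ++
    markStr .bg ([(true, .g)] ++ (primeStr (CLGr n k G t)).reverse ++ [(true, .g)])

/-- `CG_γ(t) = [g CNG(t) g]_{βγ} ∘ [g' p(CLG(t))^R g']_{αγ}`. -/
noncomputable def CGg (n k : ℕ) (G : SimpleGraph (Fin n)) (t : Finset (Fin n)) : List RL :=
  markStr .bg ([(false, .g)] ++ CNGr n k t ++ [(false, .g)]) ++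
    markStr .ag ([(true, .g)] ++ (primeStr (CLGr n k G t)).reverse ++ [(true, .g)])

/-- `log n` (base 2). -/
def logn (n : ℕ) : ℕ := Nat.log 2 n

/-- `ℓ₁ = 10·k²·n·log n`. -/
def l1 (n k : ℕ) : ℕ := 10 * k ^ 2 * n * logn n

/-- `ℓ₂ = 10·k²·ℓ₁`. -/
def l2 (n k : ℕ) : ℕ := 10 * k ^ 2 * l1 n k

/-- `ℓ₃ = 10·ℓ₂`. -/
def l3 (n k : ℕ) : ℕ := 10 * l2 n k

/-- The weight function: `w(0) = w(1) = 1`, `w($) = 10·log n`, `w(#) = ℓ₁`, `w(g) = ℓ₂`,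
`w(α) = w(β) = w(γ) = ℓ₃`. -/
def wt (n k : ℕ) : RSig → ℕ
  | .alpha => l3 n k
  | .beta => l3 n k
  | .gamma => l3 n k
  | .mk .b0 _ => 1
  | .mk .b1 _ => 1
  | .mk .dollar _ => 10 * logn n
  | .mk .hash _ => l1 n k
  | .mk .g _ => l2 n k

open Classical in
/-- The set `C_k` of `k`-cliques of `G`, in some fixed order. -/
noncomputable def cliqueList (n k : ℕ) (G : SimpleGraph (Fin n)) : List (Finset (Fin n)) :=
  (Finset.univ.filter (fun t => G.IsNClique k t)).toList

/-- The clique-detecting sequence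
`S_G = α^{2n^k} (∘_t α' CG_α(t) α') α^{2n^k} ∘ β^{2n^k} (∘_t β' CG_β(t) β') β^{2n^k} ∘
γ^{2n^k} (∘_t γ' CG_γ(t) γ') γ^{2n^k}`. -/
noncomputable def SG (n k : ℕ) (G : SimpleGraph (Fin n)) : List RL :=
  List.replicate (2 * n ^ k) (.inl .alpha) ++
    (cliqueList n k G).flatMap (fun t => [.inr .alpha] ++ CGa n k G t ++ [.inr .alpha]) ++
    List.replicate (2 * n ^ k) (.inl .alpha) ++
  (List.replicate (2 * n ^ k) (.inl .beta) ++
    (cliqueList n k G).flatMap (fun t => [.inr .beta] ++ CGb n k G t ++ [.inr .beta]) ++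
    List.replicate (2 * n ^ k) (.inl .beta)) ++
  (List.replicate (2 * n ^ k) (.inl .gamma) ++
    (cliqueList n k G).flatMap (fun t => [.inr .gamma] ++ CGg n k G t ++ [.inr .gamma]) ++
    List.replicate (2 * n ^ k) (.inl .gamma))

/-!
In `NG(u) ∘ p(LG(v))^R` every letter of `NG(u)` is unprimed and every letter of `p(LG(v))^R`
primed, so each pair of a folding joins a letter of `NG(u)` to the equal letter of `LG(v)`, and
non-crossing pairs are nested. Foldings are therefore the common subsequences of `NG(u)` and
`LG(v)`, and `WRNA` is the weight of a heaviest one.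

A common subsequence uses at most the `2n` dollars of `LG(v)` and the `|ū|` bits of `NG(u)`, so
its weight is at most `E₁ = 2n·w($) + |ū|`. If it reaches `E₁`, all dollars of `LG(v)` are used
on both sides of `ū`, so `ū` embeds into a dollar-free stretch of `LG(v)`, which is `ū'` for a
neighbour `u'` of `v`; equal lengths force `ū = ū'`, i.e. `u ∈ N(v)`. Conversely, for
`u ∈ N(v)` the subsequence `$^{a+1} ū $^{b+1}` aligning `ū` with its copy in `LG(v)` weighs `E₁`.
-/

open List

section Folding

variable {σ : Type*}

lemma crosses_comm {p q : ℕ × ℕ} : Crosses p q ↔ Crosses q p := by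
  unfold Crosses; omega

def foldingWeight (w : σ → ℕ) (S : List (σ ⊕ σ)) (A : Finset (ℕ × ℕ)) : ℕ :=
  ∑ p ∈ A, (S.map (Sum.elim w w)).getD p.1 0

lemma isFolding_insert {S : List (σ ⊕ σ)} {A : Finset (ℕ × ℕ)} {q : ℕ × ℕ} (hq : q ∉ A) :
    IsFolding S (insert q A) ↔
      (q.1 < q.2 ∧ q.2 < S.length ∧ ∃ x ∈ S[q.1]?, ∃ y ∈ S[q.2]?, LMatches x y) ∧
        IsFolding S A ∧ ∀ p ∈ A, ¬ Crosses q p := by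
  simp only [IsFolding, Finset.forall_mem_insert]
  constructor
  · rintro ⟨⟨hq', hA⟩, ⟨-, hqA⟩, hAq⟩
    exact ⟨hq', ⟨hA, fun p hp r hr => (hAq p hp).2 r hr⟩,
      fun p hp => hqA p hp (ne_of_mem_of_not_mem hp hq).symm⟩
  · rintro ⟨hq', ⟨hA, hAA⟩, hqA⟩
    exact ⟨⟨hq', hA⟩, ⟨fun h => absurd rfl h, fun p hp _ => hqA p hp⟩,
      fun p hp => ⟨fun _ => crosses_comm.not.1 (hqA p hp), hAA p hp⟩⟩

lemma IsFolding.subset_range {S : List (σ ⊕ σ)} {A : Finset (ℕ × ℕ)} (hA : IsFolding S A) :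
    A ⊆ Finset.range S.length ×ˢ Finset.range S.length := fun p hp => by
  have := hA.1 p hp
  simp only [Finset.mem_product, Finset.mem_range]
  omega

lemma le_wrna {w : σ → ℕ} {S : List (σ ⊕ σ)} {A : Finset (ℕ × ℕ)} (hA : IsFolding S A) :
    foldingWeight w S A ≤ WRNA w S :=
  le_csSup ⟨foldingWeight w S (Finset.range S.length ×ˢ Finset.range S.length), by
    rintro _ ⟨B, hB, rfl⟩
    exact Finset.sum_le_sum_of_subset hB.subset_range⟩ ⟨A, hA, rfl⟩

lemma wrna_le {w : σ → ℕ} {S : List (σ ⊕ σ)} {E : ℕ}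
    (h : ∀ A, IsFolding S A → foldingWeight w S A ≤ E) : WRNA w S ≤ E :=
  csSup_le ⟨0, ∅, ⟨by simp, by simp⟩, rfl⟩ (by rintro _ ⟨A, hA, rfl⟩; exact h A hA)

/-- The string `s ∘ p(t)^R`, for `s` and `t` written in unprimed letters. -/
def hairpin (s t : List σ) : List (σ ⊕ σ) := s.map .inl ++ (t.map .inr).reverse

variable {s t : List σ}

@[simp]
lemma length_hairpin : (hairpin s t).length = s.length + t.length := by
  simp [hairpin]

lemma getElem?_hairpin_left {i : ℕ} (hi : i < s.length) :
    (hairpin s t)[i]? = some (.inl s[i]) := by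
  simp [hairpin, getElem?_append_left, hi]

lemma getElem?_hairpin_right {m : ℕ} (hm : m < t.length) :
    (hairpin s t)[s.length + t.length - 1 - m]? = some (.inr t[m]) := by
  rw [hairpin, getElem?_append_right (by simp; omega), getElem?_reverse (by simp; omega)]
  simp only [length_map, getElem?_map]
  rw [show t.length - 1 - (s.length + t.length - 1 - m - s.length) = m by omega]
  simp [hm]

lemma getD_hairpin_left (w : σ → ℕ) {i : ℕ} (hi : i < s.length) :
    ((hairpin s t).map (Sum.elim w w)).getD i 0 = w s[i] := by
  simp [getD_eq_getElem?_getD, getElem?_hairpin_left hi]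

lemma hairpin_pair {i j : ℕ} (hij : i < j) (hj : j < s.length + t.length)
    (hm : ∃ x ∈ (hairpin s t)[i]?, ∃ y ∈ (hairpin s t)[j]?, LMatches x y) :
    ∃ (hi : i < s.length) (hj' : s.length + t.length - 1 - j < t.length),
      s.length ≤ j ∧ s[i] = t[s.length + t.length - 1 - j] := by
  obtain ⟨x, hx, y, hy, hxy⟩ := hm
  by_cases hjs : j < s.length
  · rw [getElem?_hairpin_left (hij.trans hjs)] at hx
    rw [getElem?_hairpin_left hjs] at hy
    cases Option.some.inj hx
    cases Option.some.inj hy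
    exact absurd hxy id
  have hj' : s.length + t.length - 1 - j < t.length := by omega
  have hy' := getElem?_hairpin_right (s := s) hj'
  rw [show s.length + t.length - 1 - (s.length + t.length - 1 - j) = j by omega, hy] at hy'
  cases Option.some.inj hy'
  by_cases his : i < s.length
  · rw [getElem?_hairpin_left his] at hx
    cases Option.some.inj hx
    exact ⟨his, hj', by omega, hxy⟩
  · have hi' : s.length + t.length - 1 - i < t.length := by omega
    have hx' := getElem?_hairpin_right (s := s) hi'
    rw [show s.length + t.length - 1 - (s.length + t.length - 1 - i) = i by omega, hx] at hx'
    cases Option.some.inj hx'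
    exact absurd hxy id

/-- The pair with the leftmost opening letter encloses all the others, so peeling it off leaves
a folding of what lies strictly inside it. -/
lemma IsFolding.exists_sublist_drop {w : σ → ℕ} {A : Finset (ℕ × ℕ)}
    (hA : IsFolding (hairpin s t) A) (a b : ℕ)
    (hab : ∀ p ∈ A, a ≤ p.1 ∧ p.2 + b < s.length + t.length) :
    ∃ c, c <+ s.drop a ∧ c <+ t.drop b ∧ foldingWeight w (hairpin s t) A = (c.map w).sum := by
  induction A using @Finset.induction_on_min_value ℕ (ℕ × ℕ) _ _ Prod.fst generalizing a b with
  | empty => exact ⟨[], nil_sublist _, nil_sublist _, rfl⟩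
  | insert q A hqA hmin ih =>
    obtain ⟨⟨hq12, hq2, hqm⟩, hA, hcross⟩ := (isFolding_insert hqA).1 hA
    rw [length_hairpin] at hq2
    obtain ⟨hq1, hm, hsq, hst⟩ := hairpin_pair hq12 hq2 hqm
    set m := s.length + t.length - 1 - q.2 with hm_def
    have hinner : ∀ p ∈ A, q.1 + 1 ≤ p.1 ∧ p.2 + (m + 1) < s.length + t.length := by
      intro p hp
      obtain ⟨hp12, hp2, hpm⟩ := hA.1 p hp
      rw [length_hairpin] at hp2
      obtain ⟨hp1, -, -, -⟩ := hairpin_pair hp12 hp2 hpm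
      have hqp := hmin p hp
      have hnc := hcross p hp
      unfold Crosses at hnc
      omega
    obtain ⟨c, hcs, hct, hw⟩ := ih hA (q.1 + 1) (m + 1) hinner
    obtain ⟨haq, hbq⟩ := hab q (Finset.mem_insert_self q A)
    refine ⟨s[q.1] :: c, ?_, ?_, ?_⟩
    · exact (drop_eq_getElem_cons hq1 ▸ hcs.cons_cons _).trans (drop_sublist_drop_left s haq)
    · rw [hst]
      exact (drop_eq_getElem_cons hm ▸ hct.cons_cons _).trans (drop_sublist_drop_left t (by omega))
    · rw [foldingWeight, Finset.sum_insert hqA, ← foldingWeight, hw, getD_hairpin_left w hq1]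
      rfl

lemma exists_getElem_of_cons_sublist_drop {α : Type*} {x : α} {c : List α} :
    ∀ {l : List α} {a : ℕ}, x :: c <+ l.drop a →
      ∃ i, ∃ hi : i < l.length, a ≤ i ∧ l[i] = x ∧ c <+ l.drop (i + 1)
  | [], _, h => by simp at h
  | y :: l, 0, h => by
    rcases h with _ | ⟨_, h⟩ | ⟨_, h⟩
    · obtain ⟨i, hi, -, hix, hc⟩ := exists_getElem_of_cons_sublist_drop (a := 0) h
      exact ⟨i + 1, by simpa using hi, by omega, hix, hc⟩
    · exact ⟨0, by simp, le_rfl, rfl, h⟩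
  | y :: l, a + 1, h => by
    obtain ⟨i, hi, hai, hix, hc⟩ := exists_getElem_of_cons_sublist_drop (l := l) (a := a) h
    exact ⟨i + 1, by simpa using hi, by omega, hix, hc⟩

lemma exists_isFolding_of_sublist_drop (w : σ → ℕ) {c : List σ} :
    ∀ a b, c <+ s.drop a → c <+ t.drop b →
      ∃ A, IsFolding (hairpin s t) A ∧
        (∀ p ∈ A, a ≤ p.1 ∧ p.2 + b < s.length + t.length) ∧
        foldingWeight w (hairpin s t) A = (c.map w).sum := by
  induction c with
  | nil => exact fun _ _ _ _ => ⟨∅, ⟨by simp, by simp⟩, by simp, rfl⟩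
  | cons x c ih =>
    intro a b hs ht
    obtain ⟨i, hi, hai, rfl, hs'⟩ := exists_getElem_of_cons_sublist_drop hs
    obtain ⟨j, hj, hbj, htj, ht'⟩ := exists_getElem_of_cons_sublist_drop ht
    obtain ⟨A, hA, hAb, hw⟩ := ih (i + 1) (j + 1) hs' ht'
    set q : ℕ × ℕ := (i, s.length + t.length - 1 - j)
    have hq : q.1 = i ∧ q.2 = s.length + t.length - 1 - j := ⟨rfl, rfl⟩
    have hqA : q ∉ A := fun h => by have := hAb q h; omega
    refine ⟨insert q A, (isFolding_insert hqA).2 ⟨⟨by omega, by simp; omega, ?_⟩, hA, ?_⟩, ?_, ?_⟩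
    · exact ⟨_, getElem?_hairpin_left hi, _, getElem?_hairpin_right hj, htj.symm⟩
    · intro p hp
      obtain ⟨hp12, -⟩ := hA.1 p hp
      have := hAb p hp
      unfold Crosses
      omega
    · simp only [Finset.forall_mem_insert]
      exact ⟨⟨hai, by omega⟩, fun p hp => by have := hAb p hp; omega⟩
    · rw [foldingWeight, Finset.sum_insert hqA, ← foldingWeight, hw, getD_hairpin_left w hi]
      rfl

theorem wrna_hairpin_le {w : σ → ℕ} {E : ℕ}
    (h : ∀ c, c <+ s → c <+ t → (c.map w).sum ≤ E) : WRNA w (hairpin s t) ≤ E :=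
  wrna_le fun A hA => by
    obtain ⟨c, hs, ht, hw⟩ := hA.exists_sublist_drop (w := w) 0 0 fun p hp => by
      have := hA.1 p hp
      simp only [length_hairpin] at this
      omega
    exact hw ▸ h c hs ht

theorem le_wrna_hairpin (w : σ → ℕ) {c : List σ} (hs : c <+ s) (ht : c <+ t) :
    (c.map w).sum ≤ WRNA w (hairpin s t) := by
  obtain ⟨A, hA, -, hw⟩ := exists_isFolding_of_sublist_drop w 0 0 hs ht
  exact hw ▸ le_wrna hA

end Folding

section Renaming

variable {α β : Type*} {φ : α → β} {w : β → ℕ} {s t : List α}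

lemma wrna_hairpin_map_le (hφ : Function.Injective φ) {E : ℕ}
    (h : ∀ c, c <+ s → c <+ t → (c.map fun a => w (φ a)).sum ≤ E) :
    WRNA w (hairpin (s.map φ) (t.map φ)) ≤ E :=
  wrna_hairpin_le fun c hs ht => by
    obtain ⟨c, hcs, rfl⟩ := sublist_map_iff.1 hs
    obtain ⟨c', hct, hc⟩ := sublist_map_iff.1 ht
    cases map_injective_iff.2 hφ hc
    simpa [Function.comp_def] using h c hcs hct

lemma le_wrna_hairpin_map {c : List α} (hs : c <+ s) (ht : c <+ t) :
    (c.map fun a => w (φ a)).sum ≤ WRNA w (hairpin (s.map φ) (t.map φ)) := by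
  simpa [Function.comp_def] using le_wrna_hairpin w (hs.map φ) (ht.map φ)

end Renaming

section Delimited

variable {α : Type*} {x : α}

lemma exists_eq_replicate_append_replicate {l c : List α} {m : ℕ}
    (h : c <+ replicate m x ++ l ++ replicate m x) :
    ∃ a b c', c' <+ l ∧ c = replicate a x ++ c' ++ replicate b x := by
  obtain ⟨c₁₂, c₃, rfl, h₁₂, h₃⟩ := sublist_append_iff.1 h
  obtain ⟨c₁, c₂, rfl, h₁, h₂⟩ := sublist_append_iff.1 h₁₂
  obtain ⟨a, -, rfl⟩ := sublist_replicate_iff.1 h₁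
  obtain ⟨b, -, rfl⟩ := sublist_replicate_iff.1 h₃
  exact ⟨a, b, c₂, h₂, rfl⟩

lemma exists_infix_of_infix_flatMap_delimited {Q : List α} (hx : x ∉ Q) (hQ : Q ≠ []) :
    ∀ {blocks : List (List α)}, Q <:+: (blocks.flatMap fun i => x :: i ++ [x]) →
      ∃ i ∈ blocks, Q <:+: i
  | [], h => absurd (eq_nil_of_infix_nil h) hQ
  | i :: blocks, h => by
    have not_suffix : ∀ {l : List α}, ¬ Q <:+ l ++ [x] := fun h' => by
      rcases suffix_concat_iff.1 h' with h' | ⟨l', rfl, -⟩ <;> simp_all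
    rw [flatMap_cons, infix_append_iff_ne_nil] at h
    rcases h with h | h | ⟨l₁, l₂, hl₁, -, rfl, h₁, -⟩
    · rcases infix_concat_iff.1 h with h | h
      · exact absurd h not_suffix
      rcases infix_cons_iff.1 h with h | h
      · obtain ⟨y, Q', rfl⟩ := exists_cons_of_ne_nil hQ
        simp_all [cons_prefix_cons]
      · exact ⟨i, mem_cons_self, h⟩
    · obtain ⟨j, hj, h⟩ := exists_infix_of_infix_flatMap_delimited hx hQ h
      exact ⟨j, mem_cons_of_mem _ hj, h⟩
    · rcases suffix_concat_iff.1 h₁ with h₁ | ⟨l', rfl, -⟩ <;> simp_all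

variable [DecidableEq α]

lemma exists_infix_of_replicate_append_sublist {a b : ℕ} {m t : List α}
    (h : replicate a x ++ m ++ replicate b x <+ t) (hcount : t.count x ≤ a + b) :
    ∃ Q, m <+ Q ∧ Q <:+: t ∧ x ∉ Q := by
  rw [append_assoc] at h
  obtain ⟨t₁, t₂₃, rfl, h₁, h₂₃⟩ := append_sublist_iff.1 h
  obtain ⟨t₂, t₃, rfl, h₂, h₃⟩ := append_sublist_iff.1 h₂₃
  have ha := h₁.count_le x
  have hb := h₃.count_le x
  simp only [count_replicate_self, count_append] at ha hb hcount
  exact ⟨t₂, h₂, infix_append' _ _ _, count_eq_zero.1 (by omega)⟩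

lemma count_flatMap_delimited {blocks : List (List α)} (h : ∀ i ∈ blocks, x ∉ i) :
    (blocks.flatMap fun i => x :: i ++ [x]).count x = 2 * blocks.length := by
  induction blocks with
  | nil => simp
  | cons i blocks ih =>
    simp only [flatMap_cons, count_append, count_cons_self, count_nil,
      count_eq_zero.2 (h i mem_cons_self), ih fun j hj => h j (mem_cons_of_mem _ hj),
      length_cons]
    omega

lemma exists_replicate_append_sublist_flatMap_delimited {blocks : List (List α)}
    {i : List α} (hi : i ∈ blocks) (h : ∀ j ∈ blocks, x ∉ j) :
    ∃ a b, a + b + 2 = 2 * blocks.length ∧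
      replicate (a + 1) x ++ i ++ replicate (b + 1) x <+ blocks.flatMap fun i => x :: i ++ [x] := by
  obtain ⟨B₁, B₂, rfl⟩ := append_of_mem hi
  have h₁ := count_flatMap_delimited fun j hj => h j (mem_append_left _ hj)
  have h₂ := count_flatMap_delimited fun j hj => h j (mem_append_right _ (mem_cons_of_mem _ hj))
  refine ⟨2 * B₁.length, 2 * B₂.length, by simp; omega, ?_⟩
  have hsplit : replicate (2 * B₁.length + 1) x ++ i ++ replicate (2 * B₂.length + 1) x =
      replicate (2 * B₁.length) x ++ ((x :: i ++ [x]) ++ replicate (2 * B₂.length) x) := by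
    rw [replicate_succ', replicate_succ]
    simp
  rw [hsplit, flatMap_append, flatMap_cons, ← h₁, ← h₂, ← filter_beq, ← filter_beq]
  exact filter_sublist.append ((Sublist.refl _).append filter_sublist)

end Delimited

section Gadgets

variable {n : ℕ} {G : SimpleGraph (Fin n)} {u v : Fin n}

lemma markStr_append_primeStr_reverse (xy : PT) {s t : List RCore}
    (hs : ∀ c ∈ s, c.1 = false) (ht : ∀ c ∈ t, c.1 = false) :
    markStr xy (s ++ (primeStr t).reverse) =
      hairpin ((s.map Prod.snd).map (.mk · xy)) ((t.map Prod.snd).map (.mk · xy)) := by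
  simp only [markStr, primeStr, hairpin, map_append, map_reverse, map_map]
  congr 1
  · refine map_congr_left fun c hc => ?_
    obtain ⟨_, b⟩ := c
    cases hs _ hc
    rfl
  · refine congrArg reverse (map_congr_left fun c hc => ?_)
    obtain ⟨_, b⟩ := c
    cases ht _ hc
    rfl

lemma fst_eq_false_of_mem_NGr {c : RCore} (h : c ∈ NGr n u) : c.1 = false := by
  simp only [NGr, bin, dol, mem_append, mem_replicate, mem_map] at h
  rcases h with (⟨-, rfl⟩ | ⟨i, -, rfl⟩) | ⟨-, rfl⟩ <;> rfl

lemma fst_eq_false_of_mem_LGr {c : RCore} (h : c ∈ LGr n G v) : c.1 = false := by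
  simp only [LGr, bin, dol, mem_append, mem_flatMap, mem_cons, mem_map,
    not_mem_nil, or_false] at h
  rcases h with ⟨_, -, (rfl | ⟨i, -, rfl⟩) | rfl⟩ | ⟨_, -, rfl | rfl⟩ <;> rfl

def bits (n : ℕ) (v : Fin n) : List RBase := (bin n v).map Prod.snd

lemma length_bits (n : ℕ) (v : Fin n) : (bits n v).length = 2 * Nat.clog 2 n := by
  simp [bits, bin]

lemma mem_bits {b : RBase} (h : b ∈ bits n v) : b = .b0 ∨ b = .b1 := by
  simp only [bits, bin, map_map, mem_map, mem_range, Function.comp_apply] at h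
  obtain ⟨i, -, rfl⟩ := h
  split <;> simp

lemma bits_injective (n : ℕ) : Function.Injective (bits n) := by
  intro u v h
  have hbit : ∀ i < 2 * Nat.clog 2 n, (u : ℕ).testBit i = (v : ℕ).testBit i := by
    intro i hi
    have := congrArg (·[i]?) h
    simp only [bits, bin, map_map, getElem?_map, getElem?_range hi, Option.map_some,
      Function.comp_apply, Option.some.injEq] at this
    split_ifs at this <;> simp_all
  refine Fin.ext (Nat.eq_of_testBit_eq fun i => ?_)
  by_cases hi : i < 2 * Nat.clog 2 n
  · exact hbit i hi
  · have hn : n ≤ 2 ^ i := (Nat.le_pow_clog one_lt_two n).trans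
      (Nat.pow_le_pow_right two_pos (by omega))
    rw [Nat.testBit_eq_false_of_lt (u.2.trans_le hn), Nat.testBit_eq_false_of_lt (v.2.trans_le hn)]

lemma map_snd_NGr (n : ℕ) (u : Fin n) :
    (NGr n u).map Prod.snd =
      replicate (2 * n) .dollar ++ bits n u ++ replicate (2 * n) .dollar := by
  simp [NGr, bits, dol]

lemma mem_nbrs : u ∈ nbrs n G v ↔ G.Adj v u := by
  simp [nbrs]

/-- The inner words of the blocks `$ ū $` and `$ $` of `LG(v)`. -/
noncomputable def lgBlocks (n : ℕ) (G : SimpleGraph (Fin n)) (v : Fin n) : List (List RBase) :=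
  (nbrs n G v).map (bits n) ++ (nonNbrs n G v).map fun _ => []

lemma map_snd_LGr (n : ℕ) (G : SimpleGraph (Fin n)) (v : Fin n) :
    (LGr n G v).map Prod.snd = (lgBlocks n G v).flatMap fun i => .dollar :: i ++ [.dollar] := by
  rw [lgBlocks, flatMap_append, flatMap_map, flatMap_map]
  simp [LGr, bits, dol, map_flatMap]

lemma dollar_not_mem_of_mem_lgBlocks {i : List RBase} (hi : i ∈ lgBlocks n G v) :
    RBase.dollar ∉ i := by
  simp only [lgBlocks, mem_append, mem_map] at hi
  rcases hi with ⟨u, -, rfl⟩ | ⟨u, -, rfl⟩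
  · exact fun h => by simpa using mem_bits h
  · simp

lemma length_lgBlocks (n : ℕ) (G : SimpleGraph (Fin n)) (v : Fin n) :
    (lgBlocks n G v).length = n := by
  classical
  simp [lgBlocks, nbrs, nonNbrs, Finset.card_filter_add_card_filter_not]

lemma count_dollar_LGr (n : ℕ) (G : SimpleGraph (Fin n)) (v : Fin n) :
    ((LGr n G v).map Prod.snd).count .dollar = 2 * n := by
  rw [map_snd_LGr, count_flatMap_delimited fun _ => dollar_not_mem_of_mem_lgBlocks,
    length_lgBlocks]

end Gadgets

def matchScore (n : ℕ) : ℕ := 2 * n * (10 * logn n) + 2 * Nat.clog 2 n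

section Score

variable {n k : ℕ} {G : SimpleGraph (Fin n)} {xy : PT} {u v : Fin n}

lemma wt_dollar : wt n k (.mk .dollar xy) = 10 * logn n := rfl

lemma sum_wt_of_sublist_bits {c : List RBase} (h : c <+ bits n u) :
    (c.map fun b => wt n k (.mk b xy)).sum = c.length := by
  rw [map_congr_left (g := fun _ => 1) fun b hb => ?_]
  · simp
  · rcases mem_bits (h.subset hb) with rfl | rfl <;> rfl

lemma exists_eq_append_of_sublist_gadgets {c : List RBase} (hs : c <+ (NGr n u).map Prod.snd)
    (ht : c <+ (LGr n G v).map Prod.snd) :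
    ∃ a b c', c = replicate a .dollar ++ c' ++ replicate b .dollar ∧ a + b ≤ 2 * n ∧
      c' <+ bits n u ∧
      (c.map fun b => wt n k (.mk b xy)).sum = (a + b) * (10 * logn n) + c'.length := by
  rw [map_snd_NGr] at hs
  obtain ⟨a, b, c', hc', rfl⟩ := exists_eq_replicate_append_replicate hs
  have hD : c'.count .dollar = 0 :=
    count_eq_zero.2 fun h => by simpa using mem_bits (hc'.subset h)
  have hcount := ht.count_le .dollar
  simp only [count_dollar_LGr, count_append, count_replicate_self, hD] at hcount
  refine ⟨a, b, c', rfl, by omega, hc', ?_⟩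
  simp only [map_append, sum_append, map_replicate, sum_replicate, smul_eq_mul,
    sum_wt_of_sublist_bits hc', wt_dollar]
  ring

lemma weight_le_matchScore {c : List RBase} (hs : c <+ (NGr n u).map Prod.snd)
    (ht : c <+ (LGr n G v).map Prod.snd) :
    (c.map fun b => wt n k (.mk b xy)).sum ≤ matchScore n := by
  obtain ⟨a, b, c', -, hab, hc', hw⟩ :=
    exists_eq_append_of_sublist_gadgets (k := k) (xy := xy) hs ht
  have hlen := hc'.length_le
  rw [length_bits] at hlen
  rw [hw, matchScore]
  have := Nat.mul_le_mul_right (10 * logn n) hab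
  omega

lemma adj_of_replicate_append_bits_sublist (hn : 2 ≤ n) {a b : ℕ} (hab : a + b = 2 * n)
    (h : replicate a .dollar ++ bits n u ++ replicate b .dollar <+ (LGr n G v).map Prod.snd) :
    G.Adj v u := by
  obtain ⟨Q, huQ, hQ, hDQ⟩ :=
    exists_infix_of_replicate_append_sublist h (by rw [count_dollar_LGr]; omega)
  have hu : bits n u ≠ [] := ne_nil_of_length_pos (by
    have := Nat.clog_pos one_lt_two hn
    rw [length_bits]; omega)
  rw [map_snd_LGr] at hQ
  obtain ⟨i, hi, hQi⟩ := exists_infix_of_infix_flatMap_delimited hDQ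
    (fun h => hu (eq_nil_of_sublist_nil (h ▸ huQ))) hQ
  simp only [lgBlocks, mem_append, mem_map] at hi
  rcases hi with ⟨u', hu', rfl⟩ | ⟨_, -, rfl⟩
  · rw [bits_injective n ((huQ.trans hQi.sublist).eq_of_length (by simp [length_bits]))]
    exact mem_nbrs.1 hu'
  · exact absurd (eq_nil_of_sublist_nil (huQ.trans hQi.sublist)) hu

lemma weight_le_matchScore_sub_one (hadj : ¬ G.Adj v u) {c : List RBase}
    (hs : c <+ (NGr n u).map Prod.snd) (ht : c <+ (LGr n G v).map Prod.snd) :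
    (c.map fun b => wt n k (.mk b xy)).sum ≤ matchScore n - 1 := by
  obtain ⟨a, b, c', rfl, hab, hc', hw⟩ :=
    exists_eq_append_of_sublist_gadgets (k := k) (xy := xy) hs ht
  have hlen := hc'.length_le
  rw [length_bits] at hlen
  rw [hw, matchScore]
  rcases lt_or_ge n 2 with hn | hn
  · interval_cases n <;> simp_all [logn]
  have hlog : 0 < logn n := Nat.log_pos one_lt_two hn
  rcases Nat.lt_or_ge (a + b) (2 * n) with hab' | hab'
  · have := Nat.mul_le_mul_right (10 * logn n) (Nat.succ_le_of_lt hab')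
    rw [Nat.succ_mul] at this
    omega
  · rcases Nat.lt_or_ge c'.length (2 * Nat.clog 2 n) with hc | hc
    · have := Nat.mul_le_mul_right (10 * logn n) hab
      omega
    · rw [hc'.eq_of_length (by rw [length_bits]; omega)] at ht
      exact absurd (adj_of_replicate_append_bits_sublist hn (by omega) ht) hadj

lemma exists_sublist_weight_eq_matchScore (hadj : G.Adj v u) :
    ∃ c, c <+ (NGr n u).map Prod.snd ∧ c <+ (LGr n G v).map Prod.snd ∧
      (c.map fun b => wt n k (.mk b xy)).sum = matchScore n := by
  have hu : bits n u ∈ lgBlocks n G v := mem_append_left _ (mem_map_of_mem (mem_nbrs.2 hadj))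
  obtain ⟨a, b, hab, h⟩ := exists_replicate_append_sublist_flatMap_delimited hu
    fun _ => dollar_not_mem_of_mem_lgBlocks
  rw [length_lgBlocks] at hab
  refine ⟨_, ?_, map_snd_LGr n G v ▸ h, ?_⟩
  · rw [map_snd_NGr]
    exact ((replicate_sublist_replicate _).2 (by omega)).append (Sublist.refl _) |>.append
      ((replicate_sublist_replicate _).2 (by omega))
  · simp only [map_append, sum_append, map_replicate, sum_replicate, smul_eq_mul,
      sum_wt_of_sublist_bits (Sublist.refl _), length_bits, matchScore, wt_dollar, ← hab]
    ring

end Score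

/-- Claim 3.4 of the paper.
There is an integer `E₁` depending only on `n` (the paper computes `E₁ = (10n+1)·log n`) such
that for every `xy ∈ {αβ, αγ, βγ}` and every pair of nodes `u, v` of `G`: the weighted RNA
folding score `WRNA([NG(u) ∘ p(LG(v))^R]_xy)` equals `E₁` if `u ∈ N(v)`, and is at most
`E₁ − 1` otherwise. -/
theorem wrna_node_list_gadget (n : ℕ) :
    ∃ E₁ : ℕ, ∀ (k : ℕ) (G : SimpleGraph (Fin n)) (xy : PT) (u v : Fin n),
      (G.Adj v u →
        WRNA (wt n k) (markStr xy (NGr n u ++ (primeStr (LGr n G v)).reverse)) = E₁) ∧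
      (¬ G.Adj v u →
        WRNA (wt n k) (markStr xy (NGr n u ++ (primeStr (LGr n G v)).reverse)) ≤ E₁ - 1) := by
  refine ⟨matchScore n, fun k G xy u v => ?_⟩
  have hinj : Function.Injective (RSig.mk · xy) := fun _ _ h => (RSig.mk.inj h).1
  rw [markStr_append_primeStr_reverse xy (fun _ => fst_eq_false_of_mem_NGr)
    (fun _ => fst_eq_false_of_mem_LGr)]
  refine ⟨fun hadj => le_antisymm ?_ ?_, fun hnadj => ?_⟩
  · exact wrna_hairpin_map_le hinj fun c hs ht => weight_le_matchScore hs ht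
  · obtain ⟨c, hs, ht, hc⟩ := exists_sublist_weight_eq_matchScore (k := k) (xy := xy) hadj
    exact hc ▸ le_wrna_hairpin_map hs ht
  · exact wrna_hairpin_map_le hinj fun c hs ht => weight_le_matchScore_sub_one hnadj hs ht

end RNAFolding
end

section
/- Let x = x₁⋯x_n and y = y₁⋯y_n be two sequences over Σ (letters without primes), and let ŷ := y'_n y'_{n−1} ⋯ y'_1 be the reversed sequence of matching letters of y. Then the RNA folding score of the concatenation equals the length of the longest common subsequence: RNA(x ∘ ŷ) = LCS(x, y). -/
/-!
Formalization of (weighted) RNA folding from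
"If the Current Clique Algorithms are Optimal, so is Valiant's Parser"
(Abboud, Backurs, Vassilevska Williams), Section 3.

Letters come from `Σ ∪ Σ'`, modelled as `σ ⊕ σ`: `Sum.inl a` is the letter `a ∈ Σ` and
`Sum.inr a` is its matching letter `a' ∈ Σ'`.
-/

namespace RNAFolding

/-!
A pair of a non-crossing folding of `x ∘ ŷ` can only join a letter `x[i]` of the first half to a
letter `y[j]'` of the second half, since two unprimed (or two primed) letters never match.
Reading the second half backwards turns "non-crossing" (nested) into "order preserving", so the
pairs `(i, j)` of a folding are exactly the aligned positions of an occurrence of a common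
subsequence of `x` and `y`, and conversely.
-/

section CommonMatching

variable {α : Type*}

def IsCommonMatching (x y : List α) (B : Finset (ℕ × ℕ)) : Prop :=
  (∀ p ∈ B, ∃ a, x[p.1]? = some a ∧ y[p.2]? = some a) ∧
    ∀ p ∈ B, ∀ q ∈ B, p.1 < q.1 ↔ p.2 < q.2

theorem sublist_take_append_singleton {l : List α} {i : ℕ} {a : α} (h : l[i]? = some a) :
    (l.take i ++ [a]).Sublist l := by
  simpa [List.take_add_one, h] using List.take_sublist (i + 1) l

theorem IsCommonMatching.exists_sublist {x y : List α} {B : Finset (ℕ × ℕ)}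
    (hB : IsCommonMatching x y B) :
    ∃ z : List α, z.Sublist x ∧ z.Sublist y ∧ z.length = B.card := by
  induction B using Finset.induction_on_max_value (f := (Prod.fst : ℕ × ℕ → ℕ))
    generalizing x y with
  | empty => exact ⟨[], List.nil_sublist _, List.nil_sublist _, rfl⟩
  | insert p B hpB hmax ih =>
    obtain ⟨hletters, hmono⟩ := hB
    have hlt : ∀ q ∈ B, q.1 < p.1 ∧ q.2 < p.2 := by
      intro q hq
      have hqp := hmono q (B.mem_insert_of_mem hq) p (B.mem_insert_self p)
      have hpq := hmono p (B.mem_insert_self p) q (B.mem_insert_of_mem hq)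
      have hne : q ≠ p := fun h => hpB (h ▸ hq)
      have := hmax q hq
      have : q.1 ≠ p.1 := fun h1 => hne (Prod.ext h1 (by omega))
      omega
    obtain ⟨a, hxa, hya⟩ := hletters p (B.mem_insert_self p)
    have hB' : IsCommonMatching (x.take p.1) (y.take p.2) B := by
      refine ⟨fun q hq => ?_, fun q hq r hr => hmono q (B.mem_insert_of_mem hq) r
        (B.mem_insert_of_mem hr)⟩
      obtain ⟨b, hxb, hyb⟩ := hletters q (B.mem_insert_of_mem hq)
      exact ⟨b, by rwa [List.getElem?_take_of_lt (hlt q hq).1],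
        by rwa [List.getElem?_take_of_lt (hlt q hq).2]⟩
    obtain ⟨z, hzx, hzy, hz⟩ := ih hB'
    refine ⟨z ++ [a], (hzx.append_right [a]).trans (sublist_take_append_singleton hxa),
      (hzy.append_right [a]).trans (sublist_take_append_singleton hya), ?_⟩
    simp [Finset.card_insert_of_notMem hpB, hz]

theorem exists_isCommonMatching_of_sublist {x y z : List α} (hzx : z.Sublist x)
    (hzy : z.Sublist y) : ∃ B, IsCommonMatching x y B ∧ B.card = z.length := by
  obtain ⟨f, hf⟩ := List.sublist_iff_exists_orderEmbedding_getElem?_eq.mp hzx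
  obtain ⟨g, hg⟩ := List.sublist_iff_exists_orderEmbedding_getElem?_eq.mp hzy
  refine ⟨(Finset.range z.length).image fun i => (f i, g i), ⟨?_, ?_⟩, ?_⟩
  · simp only [Finset.mem_image, Finset.mem_range]
    rintro _ ⟨i, hi, rfl⟩
    exact ⟨z[i], (hf i).symm.trans (List.getElem?_eq_getElem hi),
      (hg i).symm.trans (List.getElem?_eq_getElem hi)⟩
  · simp only [Finset.mem_image]
    rintro _ ⟨i, -, rfl⟩ _ ⟨j, -, rfl⟩
    rw [f.lt_iff_lt, g.lt_iff_lt]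
  · rw [Finset.card_image_of_injective _ fun i j h => f.injective (Prod.ext_iff.mp h).1,
      Finset.card_range]

end CommonMatching

theorem rna_eq_sSup_card {σ : Type*} (S : List (σ ⊕ σ)) :
    RNA S = sSup {m | ∃ A, IsFolding S A ∧ A.card = m} := by
  suffices h : ∀ A, IsFolding S A →
      ∑ p ∈ A, (S.map (Sum.elim (fun _ => 1) fun _ => 1)).getD p.1 0 = A.card by
    simp only [RNA, WRNA]
    congr 1
    ext m
    exact exists_congr fun A => and_congr_right fun hA => by rw [h A hA]
  intro A hA
  rw [Finset.card_eq_sum_ones]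
  refine Finset.sum_congr rfl fun p hp => ?_
  obtain ⟨h12, h2, -⟩ := hA.1 p hp
  rw [List.getD_eq_getElem?_getD, List.getElem?_map, List.getElem?_eq_getElem (by omega)]
  rcases S[p.1] <;> rfl

section MirrorConcat

/-- With `n = |x| + |y|`, letter `j` of `y` sits at position `n - 1 - j` of `x ∘ ŷ`; the map is an
involution on `[0, n)`. -/
def reflectSnd (n : ℕ) (p : ℕ × ℕ) : ℕ × ℕ := (p.1, n - 1 - p.2)

variable {σ : Type*} {x y : List σ}

theorem getElem?_append_reverse_of_lt {i : ℕ} (hi : i < x.length) :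
    (x.map Sum.inl ++ (y.map Sum.inr).reverse)[i]? = x[i]?.map Sum.inl := by
  rw [List.getElem?_append_left (by simpa), List.getElem?_map]

theorem getElem?_append_reverse_of_le {i : ℕ} (h₁ : x.length ≤ i)
    (h₂ : i < x.length + y.length) :
    (x.map Sum.inl ++ (y.map Sum.inr).reverse)[i]? =
      y[x.length + y.length - 1 - i]?.map Sum.inr := by
  rw [List.getElem?_append_right (by simpa), List.getElem?_reverse (by simp; omega),
    List.getElem?_map]
  congr 2
  simp only [List.length_map]
  omega

theorem exists_eq_of_lMatches {i j : ℕ} (hij : i < j) (hj : j < x.length + y.length)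
    (h : ∃ u ∈ (x.map Sum.inl ++ (y.map Sum.inr).reverse)[i]?,
      ∃ v ∈ (x.map Sum.inl ++ (y.map Sum.inr).reverse)[j]?, LMatches u v) :
    i < x.length ∧ x.length ≤ j ∧
      ∃ a, x[i]? = some a ∧ y[x.length + y.length - 1 - j]? = some a := by
  obtain ⟨u, hu, v, hv, huv⟩ := h
  rcases lt_or_ge i x.length with hi | hi
  · rw [getElem?_append_reverse_of_lt hi, Option.mem_map] at hu
    obtain ⟨a, ha, rfl⟩ := hu
    rcases lt_or_ge j x.length with hjx | hjx
    · rw [getElem?_append_reverse_of_lt hjx, Option.mem_map] at hv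
      obtain ⟨b, -, rfl⟩ := hv
      exact huv.elim
    · rw [getElem?_append_reverse_of_le hjx hj, Option.mem_map] at hv
      obtain ⟨b, hb, rfl⟩ := hv
      obtain rfl : a = b := huv
      exact ⟨hi, hjx, a, ha, hb⟩
  · rw [getElem?_append_reverse_of_le hi (by omega), Option.mem_map] at hu
    rw [getElem?_append_reverse_of_le (by omega) hj, Option.mem_map] at hv
    obtain ⟨a, -, rfl⟩ := hu
    obtain ⟨b, -, rfl⟩ := hv
    exact huv.elim

theorem lMatches_of_eq {i j : ℕ} {a : σ} (hx : x[i]? = some a) (hy : y[j]? = some a) :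
    ∃ u ∈ (x.map Sum.inl ++ (y.map Sum.inr).reverse)[i]?,
      ∃ v ∈ (x.map Sum.inl ++ (y.map Sum.inr).reverse)[x.length + y.length - 1 - j]?,
        LMatches u v := by
  have hi := (List.getElem?_eq_some_iff.mp hx).1
  have hj := (List.getElem?_eq_some_iff.mp hy).1
  refine ⟨Sum.inl a, ?_, Sum.inr a, ?_, rfl⟩
  · simp [getElem?_append_reverse_of_lt hi, hx]
  · rw [getElem?_append_reverse_of_le (by omega) (by omega),
      show x.length + y.length - 1 - (x.length + y.length - 1 - j) = j by omega]
    simp [hy]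

theorem IsFolding.isCommonMatching_image {A : Finset (ℕ × ℕ)}
    (hA : IsFolding (x.map Sum.inl ++ (y.map Sum.inr).reverse) A) :
    IsCommonMatching x y (A.image (reflectSnd (x.length + y.length))) ∧
      (A.image (reflectSnd (x.length + y.length))).card = A.card := by
  have hpair : ∀ p ∈ A, p.1 < x.length ∧ x.length ≤ p.2 ∧ p.2 < x.length + y.length ∧
      ∃ a, x[p.1]? = some a ∧ y[x.length + y.length - 1 - p.2]? = some a := by
    intro p hp
    obtain ⟨h12, h2, hmatch⟩ := hA.1 p hp
    simp only [List.length_append, List.length_reverse, List.length_map] at h2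
    obtain ⟨h1, h2', hxy⟩ := exists_eq_of_lMatches h12 h2 hmatch
    exact ⟨h1, h2', h2, hxy⟩
  refine ⟨⟨?_, ?_⟩, Finset.card_image_of_injOn ?_⟩
  · simp only [Finset.mem_image]
    rintro _ ⟨p, hp, rfl⟩
    exact (hpair p hp).2.2.2
  · simp only [Finset.mem_image]
    rintro _ ⟨p, hp, rfl⟩ _ ⟨q, hq, rfl⟩
    obtain ⟨hp1, hp2, hp3, -⟩ := hpair p hp
    obtain ⟨hq1, hq2, hq3, -⟩ := hpair q hq
    by_cases hpq : p = q
    · subst hpq; simp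
    have := hA.2 p hp q hq hpq
    simp only [Crosses, reflectSnd] at this ⊢
    omega
  · intro p hp q hq hpq
    obtain ⟨-, hp2, hp3, -⟩ := hpair p hp
    obtain ⟨-, hq2, hq3, -⟩ := hpair q hq
    simp only [reflectSnd, Prod.mk.injEq] at hpq
    exact Prod.ext hpq.1 (by omega)

theorem IsCommonMatching.isFolding_image {B : Finset (ℕ × ℕ)} (hB : IsCommonMatching x y B) :
    IsFolding (x.map Sum.inl ++ (y.map Sum.inr).reverse)
        (B.image (reflectSnd (x.length + y.length))) ∧
      (B.image (reflectSnd (x.length + y.length))).card = B.card := by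
  have hbound : ∀ p ∈ B, p.1 < x.length ∧ p.2 < y.length := by
    intro p hp
    obtain ⟨a, hx, hy⟩ := hB.1 p hp
    exact ⟨(List.getElem?_eq_some_iff.mp hx).1, (List.getElem?_eq_some_iff.mp hy).1⟩
  refine ⟨⟨?_, ?_⟩, Finset.card_image_of_injOn ?_⟩
  · simp only [Finset.mem_image]
    rintro _ ⟨p, hp, rfl⟩
    obtain ⟨a, hx, hy⟩ := hB.1 p hp
    have := hbound p hp
    simp only [reflectSnd, List.length_append, List.length_reverse, List.length_map]
    exact ⟨by omega, by omega, lMatches_of_eq hx hy⟩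
  · simp only [Finset.mem_image]
    rintro _ ⟨p, hp, rfl⟩ _ ⟨q, hq, rfl⟩ hne
    have := hbound p hp
    have := hbound q hq
    have hne' : p ≠ q := fun h => hne (h ▸ rfl)
    have hord : (p.1 < q.1 ∧ p.2 < q.2) ∨ (q.1 < p.1 ∧ q.2 < p.2) := by
      rcases lt_trichotomy p.1 q.1 with h | h | h
      · exact .inl ⟨h, (hB.2 p hp q hq).mp h⟩
      · have := hB.2 p hp q hq
        have := hB.2 q hq p hp
        exact absurd (Prod.ext h (by omega)) hne'
      · exact .inr ⟨h, (hB.2 q hq p hp).mp h⟩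
    simp only [Crosses, reflectSnd]
    omega
  · intro p hp q hq hpq
    have := hbound p hp
    have := hbound q hq
    simp only [reflectSnd, Prod.mk.injEq] at hpq
    exact Prod.ext hpq.1 (by omega)

end MirrorConcat

theorem rna_append_reverse_eq_lcs_general {σ : Type*} (x y : List σ) :
    RNA ((x.map Sum.inl : List (σ ⊕ σ)) ++ (y.map Sum.inr).reverse) =
      sSup {m | ∃ z : List σ, z.Sublist x ∧ z.Sublist y ∧ z.length = m} := by
  rw [rna_eq_sSup_card]
  congr 1
  ext m
  constructor
  · rintro ⟨A, hA, rfl⟩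
    obtain ⟨hB, hcard⟩ := hA.isCommonMatching_image
    obtain ⟨z, hzx, hzy, hz⟩ := hB.exists_sublist
    exact ⟨z, hzx, hzy, hz.trans hcard⟩
  · rintro ⟨z, hzx, hzy, rfl⟩
    obtain ⟨B, hB, hcard⟩ := exists_isCommonMatching_of_sublist hzx hzy
    obtain ⟨hA, hcard'⟩ := hB.isFolding_image
    exact ⟨_, hA, hcard'.trans hcard⟩

/-- the remark in the introduction of the paper.
Let `x = x₁⋯x_n` and `y = y₁⋯y_n` be two sequences over `Σ` (letters without primes), and let
`ŷ := y'_n y'_{n−1} ⋯ y'_1` be the reversed sequence of matching letters of `y`. Then the RNA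
folding score of the concatenation equals the length of the longest common subsequence:
`RNA(x ∘ ŷ) = LCS(x, y)`. -/
theorem rna_append_reverse_eq_lcs {σ : Type*} (x y : List σ) (h : x.length = y.length) :
    RNA ((x.map Sum.inl : List (σ ⊕ σ)) ++ (y.map Sum.inr).reverse) =
      sSup {m | ∃ z : List σ, z.Sublist x ∧ z.Sublist y ∧ z.length = m} :=
  rna_append_reverse_eq_lcs_general x y

end RNAFolding
end

section
/- Let Z be a sequence over a bracket alphabet and let Z₁ be a contiguous substring of Z of even length. If A is an alignment of Z in which every symbol of Z₁ is either deleted or belongs to a mismatched pair (no symbol of Z₁ is in a matched pair), then there is an alignment A' of Z with cost(A') ≤ cost(A) in which no symbol of Z₁ is aligned to any symbol outside Z₁. -/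
set_option maxHeartbeats 1000000


/-!
Formalization of Dyck edit distance from
"If the Current Clique Algorithms are Optimal, so is Valiant's Parser"
(Abboud, Backurs, Vassilevska Williams), Section 4.

Letters come from `Σ ∪ Σ'`, modelled as `σ ⊕ σ`: `Sum.inl a` is an opening bracket `a ∈ Σ` and
`Sum.inr a` is the corresponding closing bracket `a' ∈ Σ'`.
-/

namespace DyckEdit

/-- Two pairs of indices `(i₁,j₁)`, `(i₂,j₂)` with `i₁<j₁` and `i₂<j₂` "cross" iff they share an
index, or `i₁<i₂<j₁<j₂`, or `i₂<i₁<j₂<j₁`. -/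
def Crosses (p q : ℕ × ℕ) : Prop :=
  p.1 = q.1 ∨ p.1 = q.2 ∨ p.2 = q.1 ∨ p.2 = q.2 ∨
    (p.1 < q.1 ∧ q.1 < p.2 ∧ p.2 < q.2) ∨ (q.1 < p.1 ∧ p.1 < q.2 ∧ q.2 < p.2)

/-- `j` lies in the half-open interval `[lo, hi)`. -/
def inIco (lo hi j : ℕ) : Prop := lo ≤ j ∧ j < hi

/-- An alignment of `S`: a set of pairwise non-crossing pairs `(i,j)` with `i < j < |S|`. -/
def IsAlignment {σ : Type*} (S : List (σ ⊕ σ)) (A : Finset (ℕ × ℕ)) : Prop :=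
  (∀ p ∈ A, p.1 < p.2 ∧ p.2 < S.length) ∧
    ∀ p ∈ A, ∀ q ∈ A, p ≠ q → ¬ Crosses p q

/-- An aligned pair `(i,j)` is a match if `S[i] = σ ∈ Σ` and `S[j] = σ'`
(an opening bracket and the corresponding closing bracket); otherwise it is a mismatch. -/
def IsMatchPair {σ : Type*} (S : List (σ ⊕ σ)) (p : ℕ × ℕ) : Prop :=
  ∃ a : σ, S[p.1]? = some (.inl a) ∧ S[p.2]? = some (.inr a)

open Classical in
/-- The cost of an alignment: the number of mismatched pairs plus the number of deleted letters
(letters appearing in no pair of the alignment). -/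
noncomputable def cost {σ : Type*} (S : List (σ ⊕ σ)) (A : Finset (ℕ × ℕ)) : ℕ :=
  (A.filter (fun p => ¬ IsMatchPair S p)).card +
    ((Finset.range S.length).filter (fun i => ∀ p ∈ A, p.1 ≠ i ∧ p.2 ≠ i)).card

/-- The Dyck edit distance of `S`: the minimum cost of an alignment of `S`, which equals the
minimum number of substitutions and deletions needed to turn `S` into a string of the Dyck
language. -/
noncomputable def dyck {σ : Type*} (S : List (σ ⊕ σ)) : ℕ :=
  sInf {c | ∃ A : Finset (ℕ × ℕ), IsAlignment S A ∧ cost S A = c}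

open Classical in
/-- The contribution of the index interval `[lo, hi)` to the cost of an alignment: mismatched
pairs starting in the interval plus deleted letters in the interval. -/
noncomputable def contrib {σ : Type*} (S : List (σ ⊕ σ)) (A : Finset (ℕ × ℕ)) (lo hi : ℕ) : ℕ :=
  (A.filter (fun p => lo ≤ p.1 ∧ p.1 < hi ∧ ¬ IsMatchPair S p)).card +
    ((Finset.Ico lo hi).filter (fun i => ∀ p ∈ A, p.1 ≠ i ∧ p.2 ≠ i)).card

section Localize
variable {σ : Type*}
private lemma crosses_comm {p q : ℕ × ℕ} : Crosses p q ↔ Crosses q p := by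
  simp only [Crosses]; omega
private lemma crosses_self (p : ℕ × ℕ) : Crosses p p := Or.inl rfl
private lemma noshare {S : List (σ ⊕ σ)} {A : Finset (ℕ × ℕ)} (hA : IsAlignment S A)
    {p q : ℕ × ℕ} (hp : p ∈ A) (hq : q ∈ A) (hpq : p ≠ q) :
    p.1 ≠ q.1 ∧ p.1 ≠ q.2 ∧ p.2 ≠ q.1 ∧ p.2 ≠ q.2 := by
  have := hA.2 p hp q hq hpq
  simp only [Crosses] at this
  exact ⟨fun h => this (Or.inl h), fun h => this (Or.inr (Or.inl h)),
    fun h => this (Or.inr (Or.inr (Or.inl h))), fun h => this (Or.inr (Or.inr (Or.inr (Or.inl h))))⟩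
open Classical in
private noncomputable def Phi (S : List (σ ⊕ σ)) (lo hi : ℕ) (A : Finset (ℕ × ℕ)) : ℕ :=
  (A.filter (fun p => ¬ IsMatchPair S p ∨ inIco lo hi p.1 ∨ inIco lo hi p.2)).card +
    ((Finset.range S.length).filter (fun i => ∀ p ∈ A, p.1 ≠ i ∧ p.2 ≠ i)).card

/-- Insert a pair between two free indices. -/
private lemma surgery0 {S : List (σ ⊕ σ)} {lo hi : ℕ} {A : Finset (ℕ × ℕ)} {x y : ℕ}
    (hA : IsAlignment S A) (hxy : x < y) (hylen : y < S.length) (hxlen : x < S.length)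
    (hxf : ∀ t ∈ A, t.1 ≠ x ∧ t.2 ≠ x) (hyf : ∀ t ∈ A, t.1 ≠ y ∧ t.2 ≠ y)
    (hnc : ∀ t ∈ A, ¬ Crosses (x, y) t) :
    IsAlignment S (insert (x, y) A) ∧
      Phi S lo hi (insert (x, y) A) + 1 ≤ Phi S lo hi A := by
  classical
  constructor
  · constructor
    · intro p hp
      rcases Finset.mem_insert.mp hp with h | h
      · subst h; exact ⟨hxy, hylen⟩
      · exact hA.1 p h
    · intro p hp q hq hpq
      rcases Finset.mem_insert.mp hp with h | h <;> rcases Finset.mem_insert.mp hq with h' | h'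
      · subst h; subst h'; exact absurd rfl hpq
      · subst h; exact hnc q h'
      · subst h'; exact fun hc => hnc p h (crosses_comm.mp hc)
      · exact hA.2 p h q h' hpq
  · unfold Phi
    have h1 : (insert (x,y) A).filter (fun p : ℕ × ℕ => ¬ IsMatchPair S p ∨ inIco lo hi p.1 ∨ inIco lo hi p.2) ⊆ insert (x,y) (A.filter (fun p => ¬ IsMatchPair S p ∨ inIco lo hi p.1 ∨ inIco lo hi p.2)) := by
      intro t ht
      rcases Finset.mem_filter.mp ht with ⟨ht1, ht2⟩
      rcases Finset.mem_insert.mp ht1 with h | h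
      · exact Finset.mem_insert.mpr (Or.inl h)
      · exact Finset.mem_insert.mpr (Or.inr (Finset.mem_filter.mpr ⟨h, ht2⟩))
    have h2 : ((insert (x,y) A).filter (fun p => ¬ IsMatchPair S p ∨ inIco lo hi p.1 ∨ inIco lo hi p.2)).card ≤ (A.filter (fun p => ¬ IsMatchPair S p ∨ inIco lo hi p.1 ∨ inIco lo hi p.2)).card + 1 :=
      le_trans (Finset.card_le_card h1) (Finset.card_insert_le _ _)
    have hdel : (Finset.range S.length).filter (fun i => ∀ p ∈ insert (x,y) A, p.1 ≠ i ∧ p.2 ≠ i)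
        = (((Finset.range S.length).filter (fun i => ∀ p ∈ A, p.1 ≠ i ∧ p.2 ≠ i)).erase x).erase y := by
      ext i
      simp only [Finset.mem_filter, Finset.mem_range, Finset.mem_erase, Finset.forall_mem_insert]
      constructor
      · rintro ⟨hlen, ⟨hx', hy'⟩, hrest⟩
        exact ⟨fun h => hy' h.symm, fun h => hx' h.symm, hlen, hrest⟩
      · rintro ⟨hy', hx', hlen, hrest⟩
        exact ⟨hlen, ⟨fun h => hx' h.symm, fun h => hy' h.symm⟩, hrest⟩
    have hxmem : x ∈ (Finset.range S.length).filter (fun i => ∀ p ∈ A, p.1 ≠ i ∧ p.2 ≠ i) :=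
      Finset.mem_filter.mpr ⟨Finset.mem_range.mpr hxlen, hxf⟩
    have hymem : y ∈ ((Finset.range S.length).filter (fun i => ∀ p ∈ A, p.1 ≠ i ∧ p.2 ≠ i)).erase x :=
      Finset.mem_erase.mpr ⟨fun h => (Nat.ne_of_lt hxy) h.symm,
        Finset.mem_filter.mpr ⟨Finset.mem_range.mpr hylen, hyf⟩⟩
    rw [hdel]
    have e1 := Finset.card_erase_of_mem hymem
    have e2 := Finset.card_erase_of_mem hxmem
    have hpos : 0 < (((Finset.range S.length).filter (fun i => ∀ p ∈ A, p.1 ≠ i ∧ p.2 ≠ i)).erase x).card :=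
      Finset.card_pos.mpr ⟨y, hymem⟩
    have hpos2 : 0 < ((Finset.range S.length).filter (fun i => ∀ p ∈ A, p.1 ≠ i ∧ p.2 ≠ i)).card :=
      Finset.card_pos.mpr ⟨x, hxmem⟩
    omega
/-- Replace pair `r` by pair `n`, where `n` uses one endpoint of `r` (the other, `w`, becomes
deleted) together with the previously free index `g`. -/
private lemma surgery1 {S : List (σ ⊕ σ)} {lo hi : ℕ} {A : Finset (ℕ × ℕ)} {r n : ℕ × ℕ} {w g : ℕ}
    (hA : IsAlignment S A) (hr : r ∈ A)
    (hrt : inIco lo hi r.1 ∨ inIco lo hi r.2)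
    (hn1 : n.1 < n.2) (hn2 : n.2 < S.length)
    (hw : w = r.1 ∨ w = r.2) (hwlen : w < S.length)
    (hg : ∀ t ∈ A, t.1 ≠ g ∧ t.2 ≠ g) (hglen : g < S.length)
    (hiff : ∀ i, (n.1 = i ∨ n.2 = i) ↔ ((r.1 = i ∨ r.2 = i ∨ g = i) ∧ w ≠ i))
    (hnc : ∀ t ∈ A, t ≠ r → ¬ Crosses n t) :
    IsAlignment S (insert n (A.erase r)) ∧
      Phi S lo hi (insert n (A.erase r)) ≤ Phi S lo hi A := by
  classical
  have hnr : n ≠ r := by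
    intro h
    subst h
    have h1 := (hiff n.1).mp (Or.inl rfl)
    have h2 := (hiff n.2).mp (Or.inr rfl)
    rcases hw with hw | hw
    · exact h1.2 hw
    · exact h2.2 hw
  constructor
  · constructor
    · intro p hp
      rcases Finset.mem_insert.mp hp with h | h
      · subst h; exact ⟨hn1, hn2⟩
      · exact hA.1 p (Finset.mem_of_mem_erase h)
    · intro p hp q hq hpq
      rcases Finset.mem_insert.mp hp with h | h <;> rcases Finset.mem_insert.mp hq with h' | h'
      · subst h; subst h'; exact absurd rfl hpq
      · subst h
        exact hnc q (Finset.mem_of_mem_erase h') (Finset.ne_of_mem_erase h')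
      · subst h'
        exact fun hc => hnc p (Finset.mem_of_mem_erase h) (Finset.ne_of_mem_erase h)
          (crosses_comm.mp hc)
      · exact hA.2 p (Finset.mem_of_mem_erase h) q (Finset.mem_of_mem_erase h') hpq
  · unfold Phi
    have h1 : (insert n (A.erase r)).filter
        (fun p : ℕ × ℕ => ¬ IsMatchPair S p ∨ inIco lo hi p.1 ∨ inIco lo hi p.2) ⊆
        insert n ((A.filter (fun p => ¬ IsMatchPair S p ∨ inIco lo hi p.1 ∨ inIco lo hi p.2)).erase r) := by
      intro t ht
      rcases Finset.mem_filter.mp ht with ⟨ht1, ht2⟩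
      rcases Finset.mem_insert.mp ht1 with h | h
      · exact Finset.mem_insert.mpr (Or.inl h)
      · refine Finset.mem_insert.mpr (Or.inr (Finset.mem_erase.mpr
          ⟨Finset.ne_of_mem_erase h, Finset.mem_filter.mpr ⟨Finset.mem_of_mem_erase h, ht2⟩⟩))
    have hrmem : r ∈ A.filter (fun p => ¬ IsMatchPair S p ∨ inIco lo hi p.1 ∨ inIco lo hi p.2) :=
      Finset.mem_filter.mpr ⟨hr, Or.inr hrt⟩
    have h2 : ((insert n (A.erase r)).filter
        (fun p : ℕ × ℕ => ¬ IsMatchPair S p ∨ inIco lo hi p.1 ∨ inIco lo hi p.2)).card ≤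
        (A.filter (fun p => ¬ IsMatchPair S p ∨ inIco lo hi p.1 ∨ inIco lo hi p.2)).card := by
      have := Finset.card_le_card h1
      have h3 := Finset.card_insert_le n
        ((A.filter (fun p => ¬ IsMatchPair S p ∨ inIco lo hi p.1 ∨ inIco lo hi p.2)).erase r)
      have h4 := Finset.card_erase_of_mem hrmem
      have h5 := Finset.card_pos.mpr ⟨r, hrmem⟩
      omega
    -- the deleted set is `insert w ((del A).erase g)`
    have hwng : w ≠ g := by
      rcases hw with hw | hw
      · exact hw ▸ (hg r hr).1
      · exact hw ▸ (hg r hr).2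
    have hdel : (Finset.range S.length).filter (fun i => ∀ p ∈ insert n (A.erase r), p.1 ≠ i ∧ p.2 ≠ i)
        = insert w (((Finset.range S.length).filter (fun i => ∀ p ∈ A, p.1 ≠ i ∧ p.2 ≠ i)).erase g) := by
      ext i
      simp only [Finset.mem_filter, Finset.mem_range, Finset.mem_erase, Finset.mem_insert]
      constructor
      · rintro ⟨hlen, hrest⟩
        have hn' := hrest n (Or.inl rfl)
        by_cases hiw : i = w
        · exact Or.inl hiw
        · refine Or.inr ⟨?_, hlen, ?_⟩
          · intro hgi
            subst hgi
            have := (hiff i).mpr ⟨Or.inr (Or.inr rfl), fun h => hiw h.symm⟩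
            tauto
          · intro t ht
            by_cases htr : t = r
            · subst htr
              constructor
              · intro h
                have := (hiff i).mpr ⟨Or.inl h, fun h' => hiw h'.symm⟩
                tauto
              · intro h
                have := (hiff i).mpr ⟨Or.inr (Or.inl h), fun h' => hiw h'.symm⟩
                tauto
            · exact hrest t (Or.inr ⟨htr, ht⟩)
      · rintro (hiw | ⟨hig, hlen, hrest⟩)
        · subst hiw
          refine ⟨hwlen, ?_⟩
          rintro t (rfl | ⟨htr, htA⟩)
          · constructor
            · intro h
              exact ((hiff i).mp (Or.inl h)).2 rfl
            · intro h
              exact ((hiff i).mp (Or.inr h)).2 rfl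
          · have hne := noshare hA htA hr htr
            rcases hw with hw | hw <;> subst hw
            · exact ⟨hne.1, hne.2.2.1⟩
            · exact ⟨hne.2.1, hne.2.2.2⟩
        · refine ⟨hlen, ?_⟩
          rintro t (rfl | ⟨htr, htA⟩)
          · constructor
            · intro h
              rcases ((hiff i).mp (Or.inl h)).1 with h' | h' | h'
              · exact ((hrest r hr).1 h')
              · exact ((hrest r hr).2 h')
              · exact hig h'.symm
            · intro h
              rcases ((hiff i).mp (Or.inr h)).1 with h' | h' | h'
              · exact ((hrest r hr).1 h')
              · exact ((hrest r hr).2 h')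
              · exact hig h'.symm
          · exact hrest t htA
    rw [hdel]
    have hgmem : g ∈ (Finset.range S.length).filter (fun i => ∀ p ∈ A, p.1 ≠ i ∧ p.2 ≠ i) :=
      Finset.mem_filter.mpr ⟨Finset.mem_range.mpr hglen, hg⟩
    have hwnot : w ∉ ((Finset.range S.length).filter (fun i => ∀ p ∈ A, p.1 ≠ i ∧ p.2 ≠ i)).erase g := by
      intro hmem
      have := (Finset.mem_filter.mp (Finset.mem_of_mem_erase hmem)).2 r hr
      rcases hw with hw | hw
      · exact this.1 hw.symm
      · exact this.2 hw.symm
    rw [Finset.card_insert_of_notMem hwnot, Finset.card_erase_of_mem hgmem]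
    have := Finset.card_pos.mpr ⟨g, hgmem⟩
    omega


private lemma cost_le_Phi (S : List (σ ⊕ σ)) (lo hi : ℕ) (A : Finset (ℕ × ℕ)) :
    cost S A ≤ Phi S lo hi A := by
  classical
  refine Nat.add_le_add ?_ le_rfl
  apply Finset.card_le_card
  intro a ha
  rw [Finset.mem_filter] at ha ⊢
  exact ⟨ha.1, Or.inl ha.2⟩

private lemma Phi_eq_cost {S : List (σ ⊕ σ)} {lo hi : ℕ} {A : Finset (ℕ × ℕ)}
    (hno : ∀ p ∈ A, (inIco lo hi p.1 ∨ inIco lo hi p.2) → ¬ IsMatchPair S p) :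
    Phi S lo hi A = cost S A := by
  classical
  unfold Phi cost
  congr 1
  · apply congrArg Finset.card
    apply Finset.filter_congr
    intro x hx
    constructor
    · rintro (h | h)
      · exact h
      · exact hno x hx h
    · exact fun h => Or.inl h

-- Replace two pairs `p, q` (each touching the interval) by two pairs `u, v` on the same
-- four endpoints.
open Classical in
private lemma surgery2 {S : List (σ ⊕ σ)} {lo hi : ℕ} {A : Finset (ℕ × ℕ)} {p q u v : ℕ × ℕ}
    (hA : IsAlignment S A) (hp : p ∈ A) (hq : q ∈ A) (hpq : p ≠ q)
    (hpt : inIco lo hi p.1 ∨ inIco lo hi p.2) (hqt : inIco lo hi q.1 ∨ inIco lo hi q.2)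
    (hu1 : u.1 < u.2) (hu2 : u.2 < S.length) (hv1 : v.1 < v.2) (hv2 : v.2 < S.length)
    (hiff : ∀ i, (u.1 = i ∨ u.2 = i ∨ v.1 = i ∨ v.2 = i) ↔
      (p.1 = i ∨ p.2 = i ∨ q.1 = i ∨ q.2 = i))
    (huv : ¬ Crosses u v) (hune : u ≠ v)
    (hux : inIco lo hi u.1 ↔ inIco lo hi u.2) (hvx : inIco lo hi v.1 ↔ inIco lo hi v.2)
    (hnc : ∀ t ∈ A, t ≠ p → t ≠ q → ¬ Crosses u t ∧ ¬ Crosses v t) :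
    IsAlignment S (insert u (insert v ((A.erase p).erase q))) ∧
      Phi S lo hi (insert u (insert v ((A.erase p).erase q))) ≤ Phi S lo hi A ∧
      ((insert u (insert v ((A.erase p).erase q))).filter
          (fun t => ¬ (inIco lo hi t.1 ↔ inIco lo hi t.2))) ⊆
        ((A.filter (fun t => ¬ (inIco lo hi t.1 ↔ inIco lo hi t.2))).erase p).erase q := by
  classical
  have hmemE : ∀ t, t ∈ (A.erase p).erase q ↔ t ∈ A ∧ t ≠ p ∧ t ≠ q := by
    intro t
    simp only [Finset.mem_erase]
    tauto
  refine ⟨⟨?_, ?_⟩, ?_, ?_⟩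
  · intro t ht
    rcases Finset.mem_insert.mp ht with rfl | ht
    · exact ⟨hu1, hu2⟩
    rcases Finset.mem_insert.mp ht with rfl | ht
    · exact ⟨hv1, hv2⟩
    · exact hA.1 t ((hmemE t).mp ht).1
  · intro t ht s hs hts
    rcases Finset.mem_insert.mp ht with rfl | ht
    · rcases Finset.mem_insert.mp hs with rfl | hs
      · exact absurd rfl hts
      rcases Finset.mem_insert.mp hs with rfl | hs
      · exact huv
      · obtain ⟨hsA, hsp, hsq⟩ := (hmemE _).mp hs
        exact (hnc _ hsA hsp hsq).1
    rcases Finset.mem_insert.mp ht with rfl | ht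
    · rcases Finset.mem_insert.mp hs with rfl | hs
      · exact fun hc => huv (crosses_comm.mp hc)
      rcases Finset.mem_insert.mp hs with rfl | hs
      · exact absurd rfl hts
      · obtain ⟨hsA, hsp, hsq⟩ := (hmemE _).mp hs
        exact (hnc _ hsA hsp hsq).2
    · obtain ⟨htA, htp, htq⟩ := (hmemE _).mp ht
      rcases Finset.mem_insert.mp hs with rfl | hs
      · exact fun hc => (hnc _ htA htp htq).1 (crosses_comm.mp hc)
      rcases Finset.mem_insert.mp hs with rfl | hs
      · exact fun hc => (hnc _ htA htp htq).2 (crosses_comm.mp hc)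
      · obtain ⟨hsA, hsp, hsq⟩ := (hmemE _).mp hs
        exact hA.2 _ htA _ hsA hts
  · unfold Phi
    have h1 : (insert u (insert v ((A.erase p).erase q))).filter
        (fun t : ℕ × ℕ => ¬ IsMatchPair S t ∨ inIco lo hi t.1 ∨ inIco lo hi t.2) ⊆
        insert u (insert v (((A.filter (fun t => ¬ IsMatchPair S t ∨ inIco lo hi t.1 ∨ inIco lo hi t.2)).erase p).erase q)) := by
      intro t ht
      rcases Finset.mem_filter.mp ht with ⟨ht1, ht2⟩
      rcases Finset.mem_insert.mp ht1 with rfl | ht1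
      · exact Finset.mem_insert_self _ _
      rcases Finset.mem_insert.mp ht1 with rfl | ht1
      · exact Finset.mem_insert.mpr (Or.inr (Finset.mem_insert_self _ _))
      · obtain ⟨htA, htp, htq⟩ := (hmemE _).mp ht1
        refine Finset.mem_insert.mpr (Or.inr (Finset.mem_insert.mpr (Or.inr ?_)))
        refine Finset.mem_erase.mpr ⟨htq, Finset.mem_erase.mpr ⟨htp, ?_⟩⟩
        exact Finset.mem_filter.mpr ⟨htA, ht2⟩
    have hpm : p ∈ A.filter (fun t => ¬ IsMatchPair S t ∨ inIco lo hi t.1 ∨ inIco lo hi t.2) :=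
      Finset.mem_filter.mpr ⟨hp, Or.inr hpt⟩
    have hqm : q ∈ (A.filter (fun t => ¬ IsMatchPair S t ∨ inIco lo hi t.1 ∨ inIco lo hi t.2)).erase p :=
      Finset.mem_erase.mpr ⟨fun h => hpq h.symm, Finset.mem_filter.mpr ⟨hq, Or.inr hqt⟩⟩
    have hc1 := Finset.card_le_card h1
    have hc2 := Finset.card_insert_le u (insert v (((A.filter (fun t => ¬ IsMatchPair S t ∨ inIco lo hi t.1 ∨ inIco lo hi t.2)).erase p).erase q))
    have hc3 := Finset.card_insert_le v (((A.filter (fun t => ¬ IsMatchPair S t ∨ inIco lo hi t.1 ∨ inIco lo hi t.2)).erase p).erase q)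
    have hc4 := Finset.card_erase_of_mem hqm
    have hc5 := Finset.card_erase_of_mem hpm
    have hc6 := Finset.card_pos.mpr ⟨q, hqm⟩
    have hc7 := Finset.card_pos.mpr ⟨p, hpm⟩
    -- deleted sets are equal
    have hdel : (Finset.range S.length).filter
          (fun i => ∀ t ∈ insert u (insert v ((A.erase p).erase q)), t.1 ≠ i ∧ t.2 ≠ i)
        = (Finset.range S.length).filter (fun i => ∀ t ∈ A, t.1 ≠ i ∧ t.2 ≠ i) := by
      ext i
      simp only [Finset.mem_filter, Finset.mem_range]
      constructor
      · rintro ⟨hlen, hrest⟩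
        refine ⟨hlen, fun t ht => ?_⟩
        have hu' := hrest u (Finset.mem_insert_self _ _)
        have hv' := hrest v (Finset.mem_insert.mpr (Or.inr (Finset.mem_insert_self _ _)))
        by_cases htp : t = p
        · subst htp
          constructor
          · intro h
            have := (hiff i).mpr (Or.inl h)
            omega
          · intro h
            have := (hiff i).mpr (Or.inr (Or.inl h))
            omega
        · by_cases htq : t = q
          · subst htq
            constructor
            · intro h
              have := (hiff i).mpr (Or.inr (Or.inr (Or.inl h)))
              omega
            · intro h
              have := (hiff i).mpr (Or.inr (Or.inr (Or.inr h)))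
              omega
          · exact hrest t (Finset.mem_insert.mpr (Or.inr (Finset.mem_insert.mpr
              (Or.inr ((hmemE t).mpr ⟨ht, htp, htq⟩)))))
      · rintro ⟨hlen, hrest⟩
        refine ⟨hlen, fun t ht => ?_⟩
        have hp' := hrest p hp
        have hq' := hrest q hq
        rcases Finset.mem_insert.mp ht with rfl | ht
        · constructor
          · intro h
            have := (hiff i).mp (Or.inl h)
            omega
          · intro h
            have := (hiff i).mp (Or.inr (Or.inl h))
            omega
        rcases Finset.mem_insert.mp ht with rfl | ht
        · constructor
          · intro h
            have := (hiff i).mp (Or.inr (Or.inr (Or.inl h)))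
            omega
          · intro h
            have := (hiff i).mp (Or.inr (Or.inr (Or.inr h)))
            omega
        · exact hrest t ((hmemE t).mp ht).1
    rw [hdel]
    omega
  · intro t ht
    rcases Finset.mem_filter.mp ht with ⟨ht1, ht2⟩
    rcases Finset.mem_insert.mp ht1 with rfl | ht1
    · exact absurd hux ht2
    rcases Finset.mem_insert.mp ht1 with rfl | ht1
    · exact absurd hvx ht2
    · obtain ⟨htA, htp, htq⟩ := (hmemE _).mp ht1
      exact Finset.mem_erase.mpr ⟨htq, Finset.mem_erase.mpr ⟨htp, Finset.mem_filter.mpr ⟨htA, ht2⟩⟩⟩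

private lemma card_pair_inter {a b : ℕ} (hab : a ≠ b) (s : Finset ℕ) :
    (({a, b} : Finset ℕ) ∩ s).card = (if a ∈ s then 1 else 0) + (if b ∈ s then 1 else 0) := by
  classical
  by_cases ha : a ∈ s <;> by_cases hb : b ∈ s <;>
    simp [Finset.insert_inter_of_mem, Finset.insert_inter_of_notMem,
      Finset.singleton_inter_of_mem, Finset.singleton_inter_of_notMem, ha, hb,
      Finset.card_insert_of_notMem, hab]

open Classical in
private lemma exists_free {S : List (σ ⊕ σ)} {lo hi : ℕ} {A : Finset (ℕ × ℕ)} {p : ℕ × ℕ}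
    (hA : IsAlignment S A) (heven : Even (hi - lo))
    (hp : p ∈ A) (hX : ∀ t ∈ A, t ≠ p → (inIco lo hi t.1 ↔ inIco lo hi t.2))
    (hpx : ¬ (inIco lo hi p.1 ↔ inIco lo hi p.2)) :
    ∃ d, inIco lo hi d ∧ ∀ t ∈ A, t.1 ≠ d ∧ t.2 ≠ d := by
  classical
  set I := Finset.Ico lo hi with hI
  have hsplit := Finset.card_filter_add_card_filter_not
    (s := I) (p := fun i => ∀ t ∈ A, t.1 ≠ i ∧ t.2 ≠ i)
  -- the covered part is a disjoint union over pairs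
  have hcov : I.filter (fun i => ¬ ∀ t ∈ A, t.1 ≠ i ∧ t.2 ≠ i)
      = A.biUnion (fun t => ({t.1, t.2} : Finset ℕ) ∩ I) := by
    ext i
    simp only [Finset.mem_filter, Finset.mem_biUnion, Finset.mem_inter, Finset.mem_insert,
      Finset.mem_singleton]
    constructor
    · rintro ⟨hiI, hni⟩
      push_neg at hni
      obtain ⟨t, ht, hti⟩ := hni
      refine ⟨t, ht, ?_, hiI⟩
      by_cases h : t.1 = i
      · exact Or.inl h.symm
      · have h2 : t.2 = i := by tauto
        exact Or.inr h2.symm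
    · rintro ⟨t, ht, hor, hiI⟩
      refine ⟨hiI, ?_⟩
      push_neg
      exact ⟨t, ht, by tauto⟩
  have hdisj : (A : Set (ℕ × ℕ)).PairwiseDisjoint (fun t => ({t.1, t.2} : Finset ℕ) ∩ I) := by
    intro t ht s hs hts
    simp only [Finset.disjoint_left, Finset.mem_inter, Finset.mem_insert, Finset.mem_singleton]
    rintro i ⟨hor, _⟩ ⟨hor', _⟩
    have hns := noshare hA ht hs hts
    rcases hor with rfl | rfl <;> rcases hor' with h | h <;> omega
  have hcard : (I.filter (fun i => ¬ ∀ t ∈ A, t.1 ≠ i ∧ t.2 ≠ i)).card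
      = ∑ t ∈ A, ((if t.1 ∈ I then 1 else 0) + (if t.2 ∈ I then 1 else 0)) := by
    rw [hcov, Finset.card_biUnion hdisj]
    refine Finset.sum_congr rfl (fun t ht => ?_)
    exact card_pair_inter (Nat.ne_of_lt (hA.1 t ht).1) I
  have hsum : ∑ t ∈ A, ((if t.1 ∈ I then 1 else 0) + (if t.2 ∈ I then 1 else 0))
      = ((if p.1 ∈ I then 1 else 0) + (if p.2 ∈ I then 1 else 0)) +
        ∑ t ∈ A.erase p, ((if t.1 ∈ I then 1 else 0) + (if t.2 ∈ I then 1 else 0)) :=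
    (Finset.add_sum_erase A _ hp).symm
  have hmemI : ∀ j : ℕ, j ∈ I ↔ inIco lo hi j := by
    intro j; rw [hI, Finset.mem_Ico]; exact Iff.rfl
  have hone : ((if p.1 ∈ I then 1 else 0) + (if p.2 ∈ I then 1 else 0)) = 1 := by
    by_cases h1 : p.1 ∈ I <;> by_cases h2 : p.2 ∈ I <;>
      simp only [h1, h2, if_true, if_false] <;>
      first
        | (exfalso; exact hpx (by rw [← hmemI, ← hmemI]; tauto))
        | rfl
  have heven2 : ∑ t ∈ A.erase p, ((if t.1 ∈ I then 1 else 0) + (if t.2 ∈ I then 1 else 0))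
      = 2 * ∑ t ∈ A.erase p, (if t.1 ∈ I then 1 else 0) := by
    rw [Finset.mul_sum]
    refine Finset.sum_congr rfl (fun t ht => ?_)
    have hiff := hX t (Finset.mem_of_mem_erase ht) (Finset.ne_of_mem_erase ht)
    rw [← hmemI, ← hmemI] at hiff
    by_cases h1 : t.1 ∈ I
    · rw [if_pos h1, if_pos (hiff.mp h1)]
      omega
    · rw [if_neg h1, if_neg (fun h => h1 (hiff.mpr h))]
      omega
  have hIcard : I.card = hi - lo := Nat.card_Ico lo hi
  obtain ⟨e, he⟩ := heven
  have hfree : (I.filter (fun i => ∀ t ∈ A, t.1 ≠ i ∧ t.2 ≠ i)).card ≠ 0 := by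
    intro h0
    omega
  obtain ⟨d, hd⟩ := Finset.card_pos.mp (Nat.pos_of_ne_zero hfree)
  rcases Finset.mem_filter.mp hd with ⟨hdI, hdfree⟩
  exact ⟨d, (hmemI d).mp hdI, hdfree⟩

open Classical in
private lemma cascade_base {S : List (σ ⊕ σ)} {lo hi : ℕ} (hhi : hi ≤ S.length)
    {A : Finset (ℕ × ℕ)} {f d : ℕ}
    (hA : IsAlignment S A) (hinv : ∀ t ∈ A, (inIco lo hi t.1 ↔ inIco lo hi t.2))
    (hf : inIco lo hi f) (hd : inIco lo hi d) (hfd : f < d)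
    (hffree : ∀ t ∈ A, t.1 ≠ f ∧ t.2 ≠ f) (hdfree : ∀ t ∈ A, t.1 ≠ d ∧ t.2 ≠ d)
    (hnc : ∀ t ∈ A, ¬ Crosses (f, d) t) :
    ∃ A', IsAlignment S A' ∧ (∀ t ∈ A', (inIco lo hi t.1 ↔ inIco lo hi t.2)) ∧
      Phi S lo hi A' + 1 ≤ Phi S lo hi A := by
  obtain ⟨hal, hphi⟩ := surgery0 (lo := lo) (hi := hi) hA hfd (lt_of_lt_of_le hd.2 hhi)
    (lt_of_lt_of_le hf.2 hhi) hffree hdfree hnc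
  refine ⟨insert (f, d) A, hal, ?_, hphi⟩
  intro t ht
  rcases Finset.mem_insert.mp ht with rfl | ht
  · exact iff_of_true hf hd
  · exact hinv t ht

open Classical in
private lemma cascade {S : List (σ ⊕ σ)} {lo hi : ℕ} (hhi : hi ≤ S.length) :
    ∀ (n : ℕ) (A : Finset (ℕ × ℕ)) (f d : ℕ),
      (A.filter (fun t => Crosses (f, d) t)).card ≤ n →
      IsAlignment S A →
      (∀ t ∈ A, (inIco lo hi t.1 ↔ inIco lo hi t.2)) →
      inIco lo hi f → inIco lo hi d → f < d →
      (∀ t ∈ A, t.1 ≠ f ∧ t.2 ≠ f) → (∀ t ∈ A, t.1 ≠ d ∧ t.2 ≠ d) →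
      ∃ A', IsAlignment S A' ∧ (∀ t ∈ A', (inIco lo hi t.1 ↔ inIco lo hi t.2)) ∧
        Phi S lo hi A' + 1 ≤ Phi S lo hi A := by
  intro n
  induction n with
  | zero =>
    intro A f d hcard hA hinv hf hd hfd hffree hdfree
    refine cascade_base hhi hA hinv hf hd hfd hffree hdfree ?_
    intro t ht hcr
    have hm : t ∈ A.filter (fun t => Crosses (f, d) t) := Finset.mem_filter.mpr ⟨ht, hcr⟩
    have := Finset.card_pos.mpr ⟨t, hm⟩
    omega
  | succ n ih =>
    intro A f d hcard hA hinv hf hd hfd hffree hdfree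
    by_cases hzero : (A.filter (fun t => Crosses (f, d) t)).card = 0
    · refine cascade_base hhi hA hinv hf hd hfd hffree hdfree ?_
      intro t ht hcr
      have hm : t ∈ A.filter (fun t => Crosses (f, d) t) := Finset.mem_filter.mpr ⟨ht, hcr⟩
      have := Finset.card_pos.mpr ⟨t, hm⟩
      omega
    · obtain ⟨r, hrmem, hrmin⟩ := Finset.exists_min_image
        (A.filter (fun t => Crosses (f, d) t)) (fun t => t.2 - t.1)
        (Finset.card_pos.mp (Nat.pos_of_ne_zero hzero))
      rcases Finset.mem_filter.mp hrmem with ⟨hrA, hrcr⟩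
      have hrb := hA.1 r hrA
      have hrf := hffree r hrA
      have hrd := hdfree r hrA
      have hcases : (r.1 < f ∧ f < r.2 ∧ r.2 < d) ∨ (f < r.1 ∧ r.1 < d ∧ d < r.2) := by
        simp only [Crosses] at hrcr
        omega
      rcases hcases with hα | hβ
      · -- r = (a, b) with a < f < b < d : replace r by (r.1, f), recurse on (r.2, d)
        have hr2I : inIco lo hi r.2 := ⟨le_trans hf.1 (le_of_lt hα.2.1), lt_trans hα.2.2 hd.2⟩
        have hnc2 : ∀ t ∈ A, t ≠ r → ¬ Crosses (r.1, f) t := by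
          intro t ht htr
          have h1 : ¬ Crosses r t := hA.2 r hrA t ht (fun h => htr h.symm)
          have h2 : Crosses (f, d) t → r.2 - r.1 ≤ t.2 - t.1 :=
            fun hc => hrmin t (Finset.mem_filter.mpr ⟨ht, hc⟩)
          have h3 := hffree t ht
          have h4 := hdfree t ht
          have h5 := (hA.1 t ht).1
          simp only [Crosses] at h1 h2 ⊢
          omega
        obtain ⟨hal2, hphi2⟩ := surgery1 (lo := lo) (hi := hi) (n := (r.1, f)) (w := r.2) (g := f)
          hA hrA (Or.inr hr2I) hα.1 (lt_of_lt_of_le hf.2 hhi) (Or.inr rfl) hrb.2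
          hffree (lt_of_lt_of_le hf.2 hhi)
          (by intro i; dsimp only; omega) hnc2
        have hinv2 : ∀ t ∈ insert (r.1, f) (A.erase r), (inIco lo hi t.1 ↔ inIco lo hi t.2) := by
          intro t ht
          rcases Finset.mem_insert.mp ht with rfl | ht
          · exact iff_of_true ((hinv r hrA).mpr hr2I) hf
          · exact hinv t (Finset.mem_of_mem_erase ht)
        have hfree2 : ∀ t ∈ insert (r.1, f) (A.erase r), t.1 ≠ r.2 ∧ t.2 ≠ r.2 := by
          intro t ht
          rcases Finset.mem_insert.mp ht with rfl | ht
          · exact ⟨by omega, by omega⟩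
          · have hns := noshare hA (Finset.mem_of_mem_erase ht) hrA (Finset.ne_of_mem_erase ht)
            exact ⟨hns.2.1, hns.2.2.2⟩
        have hdfree2 : ∀ t ∈ insert (r.1, f) (A.erase r), t.1 ≠ d ∧ t.2 ≠ d := by
          intro t ht
          rcases Finset.mem_insert.mp ht with rfl | ht
          · exact ⟨by omega, by omega⟩
          · exact hdfree t (Finset.mem_of_mem_erase ht)
        have hsub : (insert (r.1, f) (A.erase r)).filter (fun t => Crosses (r.2, d) t) ⊆
            (A.filter (fun t => Crosses (f, d) t)).erase r := by
          intro t ht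
          rcases Finset.mem_filter.mp ht with ⟨ht1, hcr⟩
          rcases Finset.mem_insert.mp ht1 with rfl | ht1
          · exfalso
            simp only [Crosses] at hcr
            omega
          · have htA := Finset.mem_of_mem_erase ht1
            have htr := Finset.ne_of_mem_erase ht1
            refine Finset.mem_erase.mpr ⟨htr, Finset.mem_filter.mpr ⟨htA, ?_⟩⟩
            have h1 : ¬ Crosses r t := hA.2 r hrA t htA (fun h => htr h.symm)
            have h3 := hffree t htA
            have h4 := hdfree t htA
            have h5 := (hA.1 t htA).1
            simp only [Crosses] at h1 hcr ⊢
            omega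
        have hcard2 : ((insert (r.1, f) (A.erase r)).filter (fun t => Crosses (r.2, d) t)).card ≤ n := by
          have hle := Finset.card_le_card hsub
          have heq := Finset.card_erase_of_mem hrmem
          omega
        obtain ⟨A₃, h3a, h3b, h3c⟩ := ih (insert (r.1, f) (A.erase r)) r.2 d hcard2 hal2 hinv2
          hr2I hd hα.2.2 hfree2 hdfree2
        exact ⟨A₃, h3a, h3b, le_trans h3c hphi2⟩
      · -- r = (a, b) with f < a < d < b : replace r by (d, r.2), recurse on (f, r.1)
        have hr1I : inIco lo hi r.1 := ⟨le_trans hf.1 (le_of_lt hβ.1), lt_trans hβ.2.1 hd.2⟩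
        have hr2I : inIco lo hi r.2 := (hinv r hrA).mp hr1I
        have hnc2 : ∀ t ∈ A, t ≠ r → ¬ Crosses (d, r.2) t := by
          intro t ht htr
          have h1 : ¬ Crosses r t := hA.2 r hrA t ht (fun h => htr h.symm)
          have h2 : Crosses (f, d) t → r.2 - r.1 ≤ t.2 - t.1 :=
            fun hc => hrmin t (Finset.mem_filter.mpr ⟨ht, hc⟩)
          have h3 := hffree t ht
          have h4 := hdfree t ht
          have h5 := (hA.1 t ht).1
          simp only [Crosses] at h1 h2 ⊢
          omega
        obtain ⟨hal2, hphi2⟩ := surgery1 (lo := lo) (hi := hi) (n := (d, r.2)) (w := r.1) (g := d)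
          hA hrA (Or.inl hr1I) hβ.2.2 hrb.2 (Or.inl rfl) (lt_trans hrb.1 hrb.2)
          hdfree (lt_of_lt_of_le hd.2 hhi)
          (by intro i; dsimp only; omega) hnc2
        have hinv2 : ∀ t ∈ insert (d, r.2) (A.erase r), (inIco lo hi t.1 ↔ inIco lo hi t.2) := by
          intro t ht
          rcases Finset.mem_insert.mp ht with rfl | ht
          · exact iff_of_true hd hr2I
          · exact hinv t (Finset.mem_of_mem_erase ht)
        have hfree2 : ∀ t ∈ insert (d, r.2) (A.erase r), t.1 ≠ f ∧ t.2 ≠ f := by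
          intro t ht
          rcases Finset.mem_insert.mp ht with rfl | ht
          · exact ⟨by omega, by omega⟩
          · exact hffree t (Finset.mem_of_mem_erase ht)
        have hfree2' : ∀ t ∈ insert (d, r.2) (A.erase r), t.1 ≠ r.1 ∧ t.2 ≠ r.1 := by
          intro t ht
          rcases Finset.mem_insert.mp ht with rfl | ht
          · exact ⟨by omega, by omega⟩
          · have hns := noshare hA (Finset.mem_of_mem_erase ht) hrA (Finset.ne_of_mem_erase ht)
            exact ⟨hns.1, hns.2.2.1⟩
        have hsub : (insert (d, r.2) (A.erase r)).filter (fun t => Crosses (f, r.1) t) ⊆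
            (A.filter (fun t => Crosses (f, d) t)).erase r := by
          intro t ht
          rcases Finset.mem_filter.mp ht with ⟨ht1, hcr⟩
          rcases Finset.mem_insert.mp ht1 with rfl | ht1
          · exfalso
            simp only [Crosses] at hcr
            omega
          · have htA := Finset.mem_of_mem_erase ht1
            have htr := Finset.ne_of_mem_erase ht1
            refine Finset.mem_erase.mpr ⟨htr, Finset.mem_filter.mpr ⟨htA, ?_⟩⟩
            have h1 : ¬ Crosses r t := hA.2 r hrA t htA (fun h => htr h.symm)
            have h3 := hffree t htA
            have h4 := hdfree t htA
            have h5 := (hA.1 t htA).1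
            simp only [Crosses] at h1 hcr ⊢
            omega
        have hcard2 : ((insert (d, r.2) (A.erase r)).filter (fun t => Crosses (f, r.1) t)).card ≤ n := by
          have hle := Finset.card_le_card hsub
          have heq := Finset.card_erase_of_mem hrmem
          omega
        obtain ⟨A₃, h3a, h3b, h3c⟩ := ih (insert (d, r.2) (A.erase r)) f r.1 hcard2 hal2 hinv2
          hf hr1I hβ.1 hfree2 hfree2'
        exact ⟨A₃, h3a, h3b, le_trans h3c hphi2⟩

open Classical in
private lemma localize {S : List (σ ⊕ σ)} {lo hi : ℕ} (hhi : hi ≤ S.length)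
    (heven : Even (hi - lo)) :
    ∀ (n : ℕ) (A : Finset (ℕ × ℕ)),
      (A.filter (fun t => ¬ (inIco lo hi t.1 ↔ inIco lo hi t.2))).card ≤ n →
      IsAlignment S A →
      ∃ A', IsAlignment S A' ∧ Phi S lo hi A' ≤ Phi S lo hi A ∧
        ∀ t ∈ A', (inIco lo hi t.1 ↔ inIco lo hi t.2) := by
  intro n
  induction n with
  | zero =>
    intro A hcard hA
    refine ⟨A, hA, le_rfl, fun t ht => ?_⟩
    by_contra hc
    have hm : t ∈ A.filter (fun t => ¬ (inIco lo hi t.1 ↔ inIco lo hi t.2)) :=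
      Finset.mem_filter.mpr ⟨ht, hc⟩
    have := Finset.card_pos.mpr ⟨t, hm⟩
    omega
  | succ n ih =>
    intro A hcard hA
    by_cases hzero : (A.filter (fun t => ¬ (inIco lo hi t.1 ↔ inIco lo hi t.2))).card = 0
    · refine ⟨A, hA, le_rfl, fun t ht => ?_⟩
      by_contra hc
      have hm : t ∈ A.filter (fun t => ¬ (inIco lo hi t.1 ↔ inIco lo hi t.2)) :=
        Finset.mem_filter.mpr ⟨ht, hc⟩
      have := Finset.card_pos.mpr ⟨t, hm⟩
      omega
    by_cases hone : (A.filter (fun t => ¬ (inIco lo hi t.1 ↔ inIco lo hi t.2))).card = 1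
    · -- exactly one crossing pair : remove it and cascade
      obtain ⟨p, hXp⟩ := Finset.card_eq_one.mp hone
      have hpX : p ∈ A.filter (fun t => ¬ (inIco lo hi t.1 ↔ inIco lo hi t.2)) := by
        rw [hXp]; exact Finset.mem_singleton_self p
      rcases Finset.mem_filter.mp hpX with ⟨hpA, hpx⟩
      have hXother : ∀ t ∈ A, t ≠ p → (inIco lo hi t.1 ↔ inIco lo hi t.2) := by
        intro t ht htp
        by_contra hc
        have hm : t ∈ A.filter (fun t => ¬ (inIco lo hi t.1 ↔ inIco lo hi t.2)) :=
          Finset.mem_filter.mpr ⟨ht, hc⟩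
        rw [hXp] at hm
        exact htp (Finset.mem_singleton.mp hm)
      obtain ⟨d, hdI, hdfree⟩ := exists_free hA heven hpA hXother hpx
      have hpb := hA.1 p hpA
      -- alignment of A.erase p
      have hal1 : IsAlignment S (A.erase p) :=
        ⟨fun t ht => hA.1 t (Finset.mem_of_mem_erase ht),
         fun a ha b hb hab => hA.2 a (Finset.mem_of_mem_erase ha) b (Finset.mem_of_mem_erase hb) hab⟩
      have hinv1 : ∀ t ∈ A.erase p, (inIco lo hi t.1 ↔ inIco lo hi t.2) :=
        fun t ht => hXother t (Finset.mem_of_mem_erase ht) (Finset.ne_of_mem_erase ht)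
      have hf1free : ∀ t ∈ A.erase p, t.1 ≠ p.1 ∧ t.2 ≠ p.1 := by
        intro t ht
        have hns := noshare hA (Finset.mem_of_mem_erase ht) hpA (Finset.ne_of_mem_erase ht)
        exact ⟨hns.1, hns.2.2.1⟩
      have hf2free : ∀ t ∈ A.erase p, t.1 ≠ p.2 ∧ t.2 ≠ p.2 := by
        intro t ht
        have hns := noshare hA (Finset.mem_of_mem_erase ht) hpA (Finset.ne_of_mem_erase ht)
        exact ⟨hns.2.1, hns.2.2.2⟩
      have hdfree1 : ∀ t ∈ A.erase p, t.1 ≠ d ∧ t.2 ≠ d :=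
        fun t ht => hdfree t (Finset.mem_of_mem_erase ht)
      -- Phi of the erase
      have herase : Phi S lo hi (A.erase p) ≤ Phi S lo hi A + 1 := by
        unfold Phi
        have hfe : (A.erase p).filter (fun t : ℕ × ℕ => ¬ IsMatchPair S t ∨ inIco lo hi t.1 ∨ inIco lo hi t.2)
            = (A.filter (fun t => ¬ IsMatchPair S t ∨ inIco lo hi t.1 ∨ inIco lo hi t.2)).erase p :=
          Finset.filter_erase _ _ _
        have hpm : p ∈ A.filter (fun t => ¬ IsMatchPair S t ∨ inIco lo hi t.1 ∨ inIco lo hi t.2) := by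
          refine Finset.mem_filter.mpr ⟨hpA, Or.inr ?_⟩
          by_contra hc
          push_neg at hc
          exact hpx (iff_of_false hc.1 hc.2)
        have he1 := Finset.card_erase_of_mem hpm
        have he2 := Finset.card_pos.mpr ⟨p, hpm⟩
        have hdsub : (Finset.range S.length).filter (fun i => ∀ t ∈ A.erase p, t.1 ≠ i ∧ t.2 ≠ i)
            ⊆ insert p.1 (insert p.2 ((Finset.range S.length).filter (fun i => ∀ t ∈ A, t.1 ≠ i ∧ t.2 ≠ i))) := by
          intro i hi
          rcases Finset.mem_filter.mp hi with ⟨h1, h2⟩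
          by_cases e1 : p.1 = i
          · exact Finset.mem_insert.mpr (Or.inl e1.symm)
          by_cases e2 : p.2 = i
          · exact Finset.mem_insert.mpr (Or.inr (Finset.mem_insert.mpr (Or.inl e2.symm)))
          refine Finset.mem_insert.mpr (Or.inr (Finset.mem_insert.mpr (Or.inr
            (Finset.mem_filter.mpr ⟨h1, fun t ht => ?_⟩))))
          by_cases htp : t = p
          · subst htp; exact ⟨e1, e2⟩
          · exact h2 t (Finset.mem_erase.mpr ⟨htp, ht⟩)
        have hd1 := Finset.card_le_card hdsub
        have hd2 := Finset.card_insert_le p.1 (insert p.2 ((Finset.range S.length).filter (fun i => ∀ t ∈ A, t.1 ≠ i ∧ t.2 ≠ i)))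
        have hd3 := Finset.card_insert_le p.2 ((Finset.range S.length).filter (fun i => ∀ t ∈ A, t.1 ≠ i ∧ t.2 ≠ i))
        rw [hfe]
        omega
      -- which endpoint of p is inside the interval
      have hcase : (inIco lo hi p.1 ∧ ¬ inIco lo hi p.2) ∨ (¬ inIco lo hi p.1 ∧ inIco lo hi p.2) := by
        tauto
      have hfin : ∃ f, inIco lo hi f ∧ (∀ t ∈ A.erase p, t.1 ≠ f ∧ t.2 ≠ f) ∧ f ≠ d := by
        rcases hcase with ⟨h1, _⟩ | ⟨_, h2⟩
        · exact ⟨p.1, h1, hf1free, fun h => (hdfree p hpA).1 (h ▸ rfl)⟩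
        · exact ⟨p.2, h2, hf2free, fun h => (hdfree p hpA).2 (h ▸ rfl)⟩
      obtain ⟨f, hfI, hffree1, hfd⟩ := hfin
      have hres : ∃ A', IsAlignment S A' ∧ (∀ t ∈ A', (inIco lo hi t.1 ↔ inIco lo hi t.2)) ∧
          Phi S lo hi A' + 1 ≤ Phi S lo hi (A.erase p) := by
        rcases Nat.lt_or_ge f d with hlt | hge
        · exact cascade hhi _ (A.erase p) f d le_rfl hal1 hinv1 hfI hdI hlt hffree1 hdfree1
        · have hlt : d < f := lt_of_le_of_ne hge (fun h => hfd h.symm)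
          exact cascade hhi _ (A.erase p) d f le_rfl hal1 hinv1 hdI hfI hlt hdfree1 hffree1
      obtain ⟨A', ha', hinv', hphi'⟩ := hres
      exact ⟨A', ha', by omega, hinv'⟩
    · -- at least two crossing pairs
      have htwo : 2 ≤ (A.filter (fun t => ¬ (inIco lo hi t.1 ↔ inIco lo hi t.2))).card := by
        omega
      have hXsplit : ∀ t ∈ A, ¬ (inIco lo hi t.1 ↔ inIco lo hi t.2) →
          (t.1 < lo ∧ inIco lo hi t.2) ∨ (inIco lo hi t.1 ∧ hi ≤ t.2) := by
        intro t ht hx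
        have h5 := hA.1 t ht
        simp only [inIco] at hx ⊢
        omega
      have hsubLR : A.filter (fun t => ¬ (inIco lo hi t.1 ↔ inIco lo hi t.2)) ⊆
          (A.filter (fun t => t.1 < lo ∧ inIco lo hi t.2)) ∪
          (A.filter (fun t => inIco lo hi t.1 ∧ hi ≤ t.2)) := by
        intro t ht
        rcases Finset.mem_filter.mp ht with ⟨h1, h2⟩
        rcases hXsplit t h1 h2 with h | h
        · exact Finset.mem_union_left _ (Finset.mem_filter.mpr ⟨h1, h⟩)
        · exact Finset.mem_union_right _ (Finset.mem_filter.mpr ⟨h1, h⟩)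
      have hcards : 2 ≤ (A.filter (fun t => t.1 < lo ∧ inIco lo hi t.2)).card +
          (A.filter (fun t => inIco lo hi t.1 ∧ hi ≤ t.2)).card := by
        have hc1 := Finset.card_le_card hsubLR
        have hc2 := Finset.card_union_le (A.filter (fun t => t.1 < lo ∧ inIco lo hi t.2))
          (A.filter (fun t => inIco lo hi t.1 ∧ hi ≤ t.2))
        omega
      have hfinish : ∀ (p q u v : ℕ × ℕ), p ∈ A → q ∈ A → p ≠ q →
          ¬ (inIco lo hi p.1 ↔ inIco lo hi p.2) → ¬ (inIco lo hi q.1 ↔ inIco lo hi q.2) →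
          (inIco lo hi p.1 ∨ inIco lo hi p.2) → (inIco lo hi q.1 ∨ inIco lo hi q.2) →
          u.1 < u.2 → u.2 < S.length → v.1 < v.2 → v.2 < S.length →
          (∀ i, (u.1 = i ∨ u.2 = i ∨ v.1 = i ∨ v.2 = i) ↔
            (p.1 = i ∨ p.2 = i ∨ q.1 = i ∨ q.2 = i)) →
          ¬ Crosses u v → u ≠ v →
          (inIco lo hi u.1 ↔ inIco lo hi u.2) → (inIco lo hi v.1 ↔ inIco lo hi v.2) →
          (∀ t ∈ A, t ≠ p → t ≠ q → ¬ Crosses u t ∧ ¬ Crosses v t) →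
          ∃ A', IsAlignment S A' ∧ Phi S lo hi A' ≤ Phi S lo hi A ∧
            ∀ t ∈ A', (inIco lo hi t.1 ↔ inIco lo hi t.2) := by
        intro p q u v hpA hqA hpq hpx hqx hpt hqt hu1 hu2 hv1 hv2 hiff huv hune hux hvx hnc
        obtain ⟨hal', hphi', hXsub⟩ :=
          surgery2 hA hpA hqA hpq hpt hqt hu1 hu2 hv1 hv2 hiff huv hune hux hvx hnc
        have hpXm : p ∈ A.filter (fun t => ¬ (inIco lo hi t.1 ↔ inIco lo hi t.2)) :=
          Finset.mem_filter.mpr ⟨hpA, hpx⟩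
        have hqXm : q ∈ (A.filter (fun t => ¬ (inIco lo hi t.1 ↔ inIco lo hi t.2))).erase p :=
          Finset.mem_erase.mpr ⟨fun h => hpq h.symm, Finset.mem_filter.mpr ⟨hqA, hqx⟩⟩
        have e1 := Finset.card_erase_of_mem hpXm
        have e2 := Finset.card_erase_of_mem hqXm
        have hle := Finset.card_le_card hXsub
        obtain ⟨A'', h1, h2, h3⟩ := ih (insert u (insert v ((A.erase p).erase q))) (by omega) hal'
        exact ⟨A'', h1, le_trans h2 hphi', h3⟩
      by_cases hLL : 2 ≤ (A.filter (fun t => t.1 < lo ∧ inIco lo hi t.2)).card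
      · -- two pairs entering the interval from the left
        obtain ⟨q, hqm, hqmin⟩ := Finset.exists_min_image
          (A.filter (fun t => t.1 < lo ∧ inIco lo hi t.2)) Prod.fst (Finset.card_pos.mp (by omega))
        rcases Finset.mem_filter.mp hqm with ⟨hqA, hqL⟩
        have hne2 : ((A.filter (fun t => t.1 < lo ∧ inIco lo hi t.2)).erase q).Nonempty := by
          apply Finset.card_pos.mp
          rw [Finset.card_erase_of_mem hqm]
          omega
        obtain ⟨p, hpm', hpmin⟩ := Finset.exists_min_image _ Prod.fst hne2
        have hpq : p ≠ q := Finset.ne_of_mem_erase hpm'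
        rcases Finset.mem_filter.mp (Finset.mem_of_mem_erase hpm') with ⟨hpA, hpL⟩
        have hCpq : ¬ Crosses p q := hA.2 p hpA q hqA hpq
        have hpb := hA.1 p hpA
        have hqb := hA.1 q hqA
        have hq1 : q.1 ≤ p.1 := hqmin p (Finset.mem_of_mem_erase hpm')
        obtain ⟨hpL1, hpL2, hpL3⟩ : p.1 < lo ∧ lo ≤ p.2 ∧ p.2 < hi := ⟨hpL.1, hpL.2.1, hpL.2.2⟩
        obtain ⟨hqL1, hqL2, hqL3⟩ : q.1 < lo ∧ lo ≤ q.2 ∧ q.2 < hi := ⟨hqL.1, hqL.2.1, hqL.2.2⟩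
        have hord : q.1 < p.1 ∧ p.2 < q.2 := by
          simp only [Crosses] at hCpq
          omega
        refine hfinish p q (q.1, p.1) (p.2, q.2) hpA hqA hpq ?_ ?_ (Or.inr hpL.2) (Or.inr hqL.2)
          hord.1 (show p.1 < S.length by omega) hord.2 hqb.2
          (by intro i; tauto)
          (by simp only [Crosses]; omega)
          (by intro h; rw [Prod.mk.injEq] at h; omega)
          (by dsimp only; simp only [inIco]; omega)
          (by dsimp only; simp only [inIco]; omega) ?_
        · simp only [inIco]; omega
        · simp only [inIco]; omega
        · intro t ht htp htq
          have h1 : ¬ Crosses p t := hA.2 p hpA t ht (fun h => htp h.symm)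
          have h2 : ¬ Crosses q t := hA.2 q hqA t ht (fun h => htq h.symm)
          have h5 := (hA.1 t ht).1
          have hgap : t.1 < lo → lo ≤ t.2 → t.2 < hi → p.1 ≤ t.1 := by
            intro g1 g2 g3
            exact hpmin t (Finset.mem_erase.mpr ⟨htq, Finset.mem_filter.mpr ⟨ht, ⟨g1, g2, g3⟩⟩⟩)
          constructor <;> (simp only [Crosses] at h1 h2 ⊢; omega)
      by_cases hRR : 2 ≤ (A.filter (fun t => inIco lo hi t.1 ∧ hi ≤ t.2)).card
      · -- two pairs leaving the interval to the right
        obtain ⟨q, hqm, hqmax⟩ := Finset.exists_max_image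
          (A.filter (fun t => inIco lo hi t.1 ∧ hi ≤ t.2)) Prod.snd (Finset.card_pos.mp (by omega))
        rcases Finset.mem_filter.mp hqm with ⟨hqA, hqR⟩
        have hne2 : ((A.filter (fun t => inIco lo hi t.1 ∧ hi ≤ t.2)).erase q).Nonempty := by
          apply Finset.card_pos.mp
          rw [Finset.card_erase_of_mem hqm]
          omega
        obtain ⟨p, hpm', hpmax⟩ := Finset.exists_max_image _ Prod.snd hne2
        have hpq : p ≠ q := Finset.ne_of_mem_erase hpm'
        rcases Finset.mem_filter.mp (Finset.mem_of_mem_erase hpm') with ⟨hpA, hpR⟩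
        have hCpq : ¬ Crosses p q := hA.2 p hpA q hqA hpq
        have hpb := hA.1 p hpA
        have hqb := hA.1 q hqA
        have hq2 : p.2 ≤ q.2 := hqmax p (Finset.mem_of_mem_erase hpm')
        obtain ⟨hpR1, hpR2, hpR3⟩ : lo ≤ p.1 ∧ p.1 < hi ∧ hi ≤ p.2 := ⟨hpR.1.1, hpR.1.2, hpR.2⟩
        obtain ⟨hqR1, hqR2, hqR3⟩ : lo ≤ q.1 ∧ q.1 < hi ∧ hi ≤ q.2 := ⟨hqR.1.1, hqR.1.2, hqR.2⟩
        have hord : q.1 < p.1 ∧ p.2 < q.2 := by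
          simp only [Crosses] at hCpq
          omega
        refine hfinish p q (q.1, p.1) (p.2, q.2) hpA hqA hpq ?_ ?_ (Or.inl hpR.1) (Or.inl hqR.1)
          hord.1 (show p.1 < S.length by omega) hord.2 hqb.2
          (by intro i; tauto)
          (by simp only [Crosses]; omega)
          (by intro h; rw [Prod.mk.injEq] at h; omega)
          (by dsimp only; simp only [inIco]; omega)
          (by dsimp only; simp only [inIco]; omega) ?_
        · simp only [inIco]; omega
        · simp only [inIco]; omega
        · intro t ht htp htq
          have h1 : ¬ Crosses p t := hA.2 p hpA t ht (fun h => htp h.symm)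
          have h2 : ¬ Crosses q t := hA.2 q hqA t ht (fun h => htq h.symm)
          have h5 := (hA.1 t ht).1
          have hgap : lo ≤ t.1 → t.1 < hi → hi ≤ t.2 → t.2 ≤ p.2 := by
            intro g1 g2 g3
            exact hpmax t (Finset.mem_erase.mpr ⟨htq, Finset.mem_filter.mpr ⟨ht, ⟨⟨g1, g2⟩, g3⟩⟩⟩)
          constructor <;> (simp only [Crosses] at h1 h2 ⊢; omega)
      · -- one pair of each kind
        obtain ⟨p, hpm, hpmin⟩ := Finset.exists_min_image
          (A.filter (fun t => t.1 < lo ∧ inIco lo hi t.2)) Prod.fst (Finset.card_pos.mp (by omega))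
        obtain ⟨q, hqm, hqmax⟩ := Finset.exists_max_image
          (A.filter (fun t => inIco lo hi t.1 ∧ hi ≤ t.2)) Prod.snd (Finset.card_pos.mp (by omega))
        rcases Finset.mem_filter.mp hpm with ⟨hpA, hpL⟩
        rcases Finset.mem_filter.mp hqm with ⟨hqA, hqR⟩
        have hpb := hA.1 p hpA
        have hqb := hA.1 q hqA
        obtain ⟨hpL1, hpL2, hpL3⟩ : p.1 < lo ∧ lo ≤ p.2 ∧ p.2 < hi := ⟨hpL.1, hpL.2.1, hpL.2.2⟩
        obtain ⟨hqR1, hqR2, hqR3⟩ : lo ≤ q.1 ∧ q.1 < hi ∧ hi ≤ q.2 := ⟨hqR.1.1, hqR.1.2, hqR.2⟩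
        have hpq : p ≠ q := by
          intro h
          rw [h] at hpL1
          omega
        have hCpq : ¬ Crosses p q := hA.2 p hpA q hqA hpq
        have hord : p.2 < q.1 := by
          simp only [Crosses] at hCpq
          omega
        refine hfinish p q (p.2, q.1) (p.1, q.2) hpA hqA hpq ?_ ?_ (Or.inr hpL.2) (Or.inl hqR.1)
          hord (show q.1 < S.length by omega) (show p.1 < q.2 by omega) hqb.2
          (by intro i; tauto)
          (by simp only [Crosses]; omega)
          (by intro h; rw [Prod.mk.injEq] at h; omega)
          (by dsimp only; simp only [inIco]; omega)
          (by dsimp only; simp only [inIco]; omega) ?_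
        · simp only [inIco]; omega
        · simp only [inIco]; omega
        · intro t ht htp htq
          have h1 : ¬ Crosses p t := hA.2 p hpA t ht (fun h => htp h.symm)
          have h2 : ¬ Crosses q t := hA.2 q hqA t ht (fun h => htq h.symm)
          have h5 := (hA.1 t ht).1
          have hgapL : t.1 < lo → lo ≤ t.2 → t.2 < hi → p.1 ≤ t.1 := by
            intro g1 g2 g3
            exact hpmin t (Finset.mem_filter.mpr ⟨ht, ⟨g1, g2, g3⟩⟩)
          have hgapR : lo ≤ t.1 → t.1 < hi → hi ≤ t.2 → t.2 ≤ q.2 := by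
            intro g1 g2 g3
            exact hqmax t (Finset.mem_filter.mpr ⟨ht, ⟨⟨g1, g2⟩, g3⟩⟩)
          constructor <;> (simp only [Crosses] at h1 h2 ⊢; omega)


end Localize

/-- Lemma 4.6 of the paper.
Let `Z` be a sequence over a bracket alphabet and let `Z₁` be a contiguous substring of `Z` of
even length (here `Z = Zpre ++ Z₁ ++ Zpost`). If `A` is an alignment of `Z` in which every
symbol of `Z₁` is either deleted or belongs to a mismatched pair (no symbol of `Z₁` is in a
matched pair), then there is an alignment `A'` of `Z` with `cost(A') ≤ cost(A)` in which no
symbol of `Z₁` is aligned to any symbol outside `Z₁`. -/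
theorem alignment_localize_mismatched_substring {σ : Type*}
    (Zpre Z₁ Zpost : List (σ ⊕ σ)) (heven : Even Z₁.length)
    (A : Finset (ℕ × ℕ)) (hA : IsAlignment (Zpre ++ Z₁ ++ Zpost) A)
    (hno : ∀ p ∈ A,
      (inIco Zpre.length (Zpre.length + Z₁.length) p.1 ∨
        inIco Zpre.length (Zpre.length + Z₁.length) p.2) →
      ¬ IsMatchPair (Zpre ++ Z₁ ++ Zpost) p) :
    ∃ A' : Finset (ℕ × ℕ), IsAlignment (Zpre ++ Z₁ ++ Zpost) A' ∧
      cost (Zpre ++ Z₁ ++ Zpost) A' ≤ cost (Zpre ++ Z₁ ++ Zpost) A ∧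
      ∀ p ∈ A', (inIco Zpre.length (Zpre.length + Z₁.length) p.1 ↔
        inIco Zpre.length (Zpre.length + Z₁.length) p.2) := by
  classical
  have hhi : Zpre.length + Z₁.length ≤ (Zpre ++ Z₁ ++ Zpost).length := by
    simp [List.length_append]
  have heven' : Even (Zpre.length + Z₁.length - Zpre.length) := by simpa
  obtain ⟨A', h1, h2, h3⟩ := localize (S := Zpre ++ Z₁ ++ Zpost) (lo := Zpre.length)
    (hi := Zpre.length + Z₁.length) hhi heven' _ A le_rfl hA
  refine ⟨A', h1, ?_, h3⟩
  calc cost (Zpre ++ Z₁ ++ Zpost) A'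
      ≤ Phi (Zpre ++ Z₁ ++ Zpost) Zpre.length (Zpre.length + Z₁.length) A' :=
        cost_le_Phi _ _ _ _
    _ ≤ Phi (Zpre ++ Z₁ ++ Zpost) Zpre.length (Zpre.length + Z₁.length) A := h2
    _ = cost (Zpre ++ Z₁ ++ Zpost) A := Phi_eq_cost hno

end DyckEdit
end
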